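/- arXiv:1903.04761 — 5 statements merged into one kernel-verified Lean document; each statement's English description precedes it below -/
import Mathlib

section
/- A set X of vertices of a finite graph G is a minimal separator (i.e., a minimal s,t-separator for some vertices s and t) if and only if at least two connected components of G − X are full components for X, where a component D of G − X is full if N(D) = X. -/
open SimpleGraph

variable {V : Type*}

/-- Open neighborhood of a set: vertices outside `D` with a neighbor in `D`. -/
def nbhdSet (G : SimpleGraph V) (D : Set V) : Set V :=
  {v | v ∉ D ∧ ∃ d ∈ D, G.Adj v d}

/-- `D` is a connected component of `G - X`. -/
def IsCompOf (G : SimpleGraph V) (X : Set V) (D : Set V) : Prop :=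
  D.Nonempty ∧ D ⊆ Xᶜ ∧ (G.induce D).Connected ∧
    ∀ u ∈ D, ∀ w, w ∉ X → G.Adj u w → w ∈ D

/-- `D` is a full component for `X`: a component of `G - X` with `N(D) = X`. -/
def IsFullComp (G : SimpleGraph V) (X D : Set V) : Prop :=
  IsCompOf G X D ∧ nbhdSet G D = X

/-- `X` is an `s,t`-separator. -/
def IsSep (G : SimpleGraph V) (X : Set V) (s t : V) : Prop :=
  ∃ (hs : s ∉ X) (ht : t ∉ X),
    ¬ (G.induce (Xᶜ : Set V)).Reachable ⟨s, hs⟩ ⟨t, ht⟩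

/-- `X` is a minimal separator: an inclusion-wise minimal `s,t`-separator for some `s,t`. -/
def IsMinSep (G : SimpleGraph V) (X : Set V) : Prop :=
  ∃ s t, IsSep G X s t ∧ ∀ Y ⊆ X, IsSep G Y s t → Y = X

/-- No induced cycle of length at least 5. -/
def LongHoleFree (G : SimpleGraph V) : Prop :=
  ∀ n, 5 ≤ n → IsEmpty (SimpleGraph.cycleGraph n ↪g G)

/-- The `k`-prism: two `k`-cliques joined by a perfect matching. -/
def prism (k : ℕ) : SimpleGraph (Fin k ⊕ Fin k) where
  Adj x y := match x, y with
    | Sum.inl i, Sum.inl j => i ≠ j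
    | Sum.inr i, Sum.inr j => i ≠ j
    | Sum.inl i, Sum.inr j => i = j
    | Sum.inr i, Sum.inl j => i = j
  symm := ⟨by rintro (i|i) (j|j) h <;> exact h.symm⟩
  loopless := ⟨by rintro (i|i) h <;> exact h rfl⟩

/-- Chordal: no induced cycle of length at least 4. -/
def IsChordal (G : SimpleGraph V) : Prop :=
  ∀ n, 4 ≤ n → IsEmpty (SimpleGraph.cycleGraph n ↪g G)

/-- `Ω` is an inclusion-wise maximal clique of `G`. -/
def IsMaxClique (G : SimpleGraph V) (Ω : Set V) : Prop :=
  G.IsClique Ω ∧ ∀ Ω', G.IsClique Ω' → Ω ⊆ Ω' → Ω' = Ω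

/-- `Ω` is a potential maximal clique of `G`: a maximal clique of some
minimal chordal completion of `G`. -/
def IsPMC (G : SimpleGraph V) (Ω : Set V) : Prop :=
  ∃ H : SimpleGraph V, G ≤ H ∧ IsChordal H ∧
    (∀ H', G ≤ H' → H' ≤ H → IsChordal H' → H' = H) ∧ IsMaxClique H Ω

/-- The family of full components of `G - S`. -/
def fullComps (G : SimpleGraph V) (S : Set V) : Set (Set V) :=
  {D | IsFullComp G S D}

/-- `ζ_G(S) = max(0, #full components of G - S  - 1)`. -/
noncomputable def zeta (G : SimpleGraph V) (S : Set V) : ℕ :=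
  (fullComps G S).ncard - 1



section AuxMinSep
variable {G : SimpleGraph V} {X : Set V}

def Rout (G : SimpleGraph V) (X : Set V) (a b : V) : Prop :=
  G.Adj a b ∧ a ∉ X ∧ b ∉ X

lemma walk_rtg (G : SimpleGraph V) (X A : Set V) (hA : A ⊆ Xᶜ) :
    ∀ {a b : A}, (G.induce A).Walk a b → Relation.ReflTransGen (Rout G X) a b := by
  intro a b w
  induction w with
  | nil => exact Relation.ReflTransGen.refl
  | cons h p ih =>
    rename_i u v _
    exact Relation.ReflTransGen.head ⟨h, hA u.2, hA v.2⟩ ih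

lemma rtg_walk (G : SimpleGraph V) (X : Set V) {s t : V} (hs : s ∉ X)
    (h : Relation.ReflTransGen (Rout G X) s t) :
    ∀ ht : t ∉ X, (G.induce (Xᶜ : Set V)).Reachable ⟨s, hs⟩ ⟨t, ht⟩ := by
  induction h with
  | refl => intro ht; exact Reachable.refl _
  | tail hab hbc ih =>
    intro ht
    have hb : _ ∉ X := hbc.2.1
    exact (ih hb).trans (SimpleGraph.Adj.reachable
      (show (G.induce (Xᶜ : Set V)).Adj ⟨_, hb⟩ ⟨_, ht⟩ from hbc.1))

lemma reach_iff (G : SimpleGraph V) (X : Set V) {s t : V} (hs : s ∉ X) (ht : t ∉ X) :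
    (G.induce (Xᶜ : Set V)).Reachable ⟨s, hs⟩ ⟨t, ht⟩ ↔
      Relation.ReflTransGen (Rout G X) s t := by
  constructor
  · rintro ⟨w⟩; exact walk_rtg G X Xᶜ (le_refl _) w
  · intro h; exact rtg_walk G X hs h ht

lemma isSep_iff (G : SimpleGraph V) (X : Set V) {s t : V} :
    IsSep G X s t ↔ s ∉ X ∧ t ∉ X ∧ ¬ Relation.ReflTransGen (Rout G X) s t := by
  constructor
  · rintro ⟨hs, ht, h⟩
    exact ⟨hs, ht, fun hr => h ((reach_iff G X hs ht).mpr hr)⟩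
  · rintro ⟨hs, ht, h⟩
    exact ⟨hs, ht, fun hr => h ((reach_iff G X hs ht).mp hr)⟩

def Dset (G : SimpleGraph V) (X : Set V) (s : V) : Set V :=
  {w | Relation.ReflTransGen (Rout G X) s w}

lemma Dset_subset (G : SimpleGraph V) (X : Set V) {s : V} (hs : s ∉ X) :
    Dset G X s ⊆ Xᶜ := by
  intro w hw
  induction hw with
  | refl => exact hs
  | tail _ hbc _ => exact hbc.2.2

lemma rtg_mem (G : SimpleGraph V) (X : Set V) {D : Set V} (hD : IsCompOf G X D)
    {v u : V} (hv : v ∈ D) (h : Relation.ReflTransGen (Rout G X) v u) : u ∈ D := by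
  induction h with
  | refl => exact hv
  | tail _ hbc ih => exact hD.2.2.2 _ ih _ hbc.2.2 hbc.1

lemma comp_eq (G : SimpleGraph V) (X : Set V) {D₁ D₂ : Set V}
    (h₁ : IsCompOf G X D₁) (h₂ : IsCompOf G X D₂) {v : V} (hv₁ : v ∈ D₁) (hv₂ : v ∈ D₂) :
    D₁ = D₂ := by
  have key : ∀ (A B : Set V), IsCompOf G X A → IsCompOf G X B → v ∈ A → v ∈ B → A ⊆ B := by
    intro A B hA hB hvA hvB u hu
    obtain ⟨w⟩ := hA.2.2.1 ⟨v, hvA⟩ ⟨u, hu⟩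
    exact rtg_mem G X hB hvB (walk_rtg G X A hA.2.1 w)
  exact le_antisymm (key _ _ h₁ h₂ hv₁ hv₂) (key _ _ h₂ h₁ hv₂ hv₁)

lemma Dset_comp (G : SimpleGraph V) (X : Set V) {s : V} (hs : s ∉ X) :
    IsCompOf G X (Dset G X s) := by
  have hsub := Dset_subset G X hs
  have hsmem : s ∈ Dset G X s := Relation.ReflTransGen.refl
  refine ⟨⟨s, hsmem⟩, hsub, ?_, ?_⟩
  · rw [SimpleGraph.connected_iff]
    refine ⟨?_, ⟨⟨s, hsmem⟩⟩⟩
    · have key : ∀ w, Relation.ReflTransGen (Rout G X) s w →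
          ∀ hw : w ∈ Dset G X s, (G.induce (Dset G X s)).Reachable ⟨s, hsmem⟩ ⟨w, hw⟩ := by
        intro w hw
        induction hw with
        | refl => intro _; exact Reachable.refl _
        | tail hab hbc ih =>
          intro hw
          have hb : _ ∈ Dset G X s := hab
          exact (ih hb).trans (SimpleGraph.Adj.reachable
            (show (G.induce (Dset G X s)).Adj ⟨_, hb⟩ ⟨_, hw⟩ from hbc.1))
      intro a b
      exact ((key a a.2 a.2).symm).trans (key b b.2 b.2)
  · intro u hu w hw hadj
    exact Relation.ReflTransGen.tail hu ⟨hadj, hsub hu, hw⟩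

lemma rtg_symm {s t : V} (h : Relation.ReflTransGen (Rout G X) s t) :
    Relation.ReflTransGen (Rout G X) t s := by
  induction h with
  | refl => exact Relation.ReflTransGen.refl
  | tail _ hbc ih =>
    exact Relation.ReflTransGen.trans
      (Relation.ReflTransGen.single ⟨hbc.1.symm, hbc.2.2, hbc.2.1⟩) ih

lemma full_aux (G : SimpleGraph V) (X : Set V) {s t : V} (hs : s ∉ X) (ht : t ∉ X)
    (hnr : ¬ Relation.ReflTransGen (Rout G X) s t)
    (hmin : ∀ Y ⊆ X, s ∉ Y → t ∉ Y → ¬ Relation.ReflTransGen (Rout G Y) s t → Y = X) :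
    IsFullComp G X (Dset G X s) := by
  have hsub := Dset_subset G X hs
  have hsmem : s ∈ Dset G X s := Relation.ReflTransGen.refl
  refine ⟨Dset_comp G X hs, ?_⟩
  apply Set.eq_of_subset_of_subset
  · rintro v ⟨hvD, d, hd, hadj⟩
    by_contra hvX
    exact hvD (Relation.ReflTransGen.tail hd ⟨hadj.symm, hsub hd, hvX⟩)
  · intro x hx
    by_contra hxN
    have hxD : x ∉ Dset G X s := fun h => hsub h hx
    have hno : ∀ d ∈ Dset G X s, ¬ G.Adj x d := by
      intro d hd hadj
      exact hxN ⟨hxD, d, hd, hadj⟩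
    have hY : (X \ {x} : Set V) = X := by
      apply hmin _ Set.diff_subset (fun h => hs h.1) (fun h => ht h.1)
      intro hrY
      apply hnr
      have key : ∀ w, Relation.ReflTransGen (Rout G (X \ {x})) s w → w ∈ Dset G X s := by
        intro w hw
        induction hw with
        | refl => exact hsmem
        | @tail b c hab hbc ih =>
          by_cases hcX : c ∈ X
          · have : c = x := by
              by_contra hne
              exact hbc.2.2 ⟨hcX, hne⟩
            exact absurd (this ▸ hbc.1.symm) (hno b ih)
          · exact Relation.ReflTransGen.tail ih ⟨hbc.1, fun h => hsub ih h, hcX⟩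
      exact key t hrY
    have : x ∈ (X \ {x} : Set V) := hY.symm ▸ hx
    exact this.2 rfl

end AuxMinSep

theorem stmt0 [Fintype V] (G : SimpleGraph V) (X : Set V) :
    IsMinSep G X ↔
      ∃ D₁ D₂ : Set V, D₁ ≠ D₂ ∧ IsFullComp G X D₁ ∧ IsFullComp G X D₂ := by
  constructor
  · rintro ⟨s, t, hsep, hmin⟩
    obtain ⟨hs, ht, hnr⟩ := (isSep_iff G X).mp hsep
    have hmin' : ∀ Y ⊆ X, s ∉ Y → t ∉ Y → ¬ Relation.ReflTransGen (Rout G Y) s t → Y = X := by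
      intro Y hYX hsY htY hnrY
      exact hmin Y hYX ((isSep_iff G Y).mpr ⟨hsY, htY, hnrY⟩)
    have hmin'' : ∀ Y ⊆ X, t ∉ Y → s ∉ Y → ¬ Relation.ReflTransGen (Rout G Y) t s → Y = X := by
      intro Y hYX htY hsY hnrY
      exact hmin' Y hYX hsY htY (fun h => hnrY (rtg_symm h))
    refine ⟨Dset G X s, Dset G X t, ?_, full_aux G X hs ht hnr hmin',
      full_aux G X ht hs (fun h => hnr (rtg_symm h)) hmin''⟩
    intro heq
    have h1 : t ∈ Dset G X t := Relation.ReflTransGen.refl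
    rw [← heq] at h1
    exact hnr h1
  · rintro ⟨D₁, D₂, hne, ⟨hc₁, hf₁⟩, ⟨hc₂, hf₂⟩⟩
    obtain ⟨s, hsD⟩ := hc₁.1
    obtain ⟨t, htD⟩ := hc₂.1
    have hs : s ∉ X := hc₁.2.1 hsD
    have ht : t ∉ X := hc₂.2.1 htD
    refine ⟨s, t, (isSep_iff G X).mpr ⟨hs, ht, ?_⟩, ?_⟩
    · intro hr
      exact hne (comp_eq G X hc₁ hc₂ (rtg_mem G X hc₁ hsD hr) htD)
    · intro Y hYX hsepY
      obtain ⟨hsY, htY, hnrY⟩ := (isSep_iff G Y).mp hsepY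
      refine Set.eq_of_subset_of_subset hYX ?_
      intro x hx
      by_contra hxY
      apply hnrY
      have hsub₁ : D₁ ⊆ Yᶜ := fun u hu h => (hc₁.2.1 hu) (hYX h)
      have hsub₂ : D₂ ⊆ Yᶜ := fun u hu h => (hc₂.2.1 hu) (hYX h)
      obtain ⟨_, d₁, hd₁, hadj₁⟩ : x ∈ nbhdSet G D₁ := hf₁ ▸ hx
      obtain ⟨_, d₂, hd₂, hadj₂⟩ : x ∈ nbhdSet G D₂ := hf₂ ▸ hx
      obtain ⟨w₁⟩ := hc₁.2.2.1 ⟨s, hsD⟩ ⟨d₁, hd₁⟩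
      obtain ⟨w₂⟩ := hc₂.2.2.1 ⟨d₂, hd₂⟩ ⟨t, htD⟩
      have r₁ : Relation.ReflTransGen (Rout G Y) s d₁ := walk_rtg G Y D₁ hsub₁ w₁
      have r₂ : Relation.ReflTransGen (Rout G Y) d₂ t := walk_rtg G Y D₂ hsub₂ w₂
      exact (r₁.tail ⟨hadj₁.symm, hsub₁ hd₁, hxY⟩).trans
        ((Relation.ReflTransGen.single ⟨hadj₂, hxY, hsub₂ hd₂⟩).trans r₂)
end

section
/- For every integer k ≥ 1, the k-prism graph has exactly 2^k − 2 minimal separators: for every nonempty proper subset J of {1,…,k}, the set {a_i : i ∈ J} ∪ {b_i : i ∉ J} is a minimal separator, and these are all of them. -/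
open SimpleGraph

variable {V : Type*}

section PrismAux

variable {k : ℕ}

def sepJ (k : ℕ) (J : Set (Fin k)) : Set (Fin k ⊕ Fin k) :=
  (Sum.inl '' J) ∪ (Sum.inr '' Jᶜ)

lemma mem_sepJ_inl {J : Set (Fin k)} {i : Fin k} :
    (Sum.inl i : Fin k ⊕ Fin k) ∈ sepJ k J ↔ i ∈ J := by
  simp [sepJ]

lemma mem_sepJ_inr {J : Set (Fin k)} {i : Fin k} :
    (Sum.inr i : Fin k ⊕ Fin k) ∈ sepJ k J ↔ i ∉ J := by
  simp [sepJ]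

lemma reach_const {W : Type*} {G : SimpleGraph W} {f : W → Bool}
    (hf : ∀ u v, G.Adj u v → f u = f v) {s t : W} (h : G.Reachable s t) :
    f s = f t := by
  obtain ⟨w⟩ := h
  induction w with
  | nil => rfl
  | cons ha _ ih => exact (hf _ _ ha).trans ih

lemma reach_char (Y : Set (Fin k ⊕ Fin k)) (p q : Fin k)
    (hp : (Sum.inl p : Fin k ⊕ Fin k) ∉ Y) (hq : (Sum.inr q : Fin k ⊕ Fin k) ∉ Y) :
    ((prism k).induce (Yᶜ : Set (Fin k ⊕ Fin k))).Reachable ⟨Sum.inl p, hp⟩ ⟨Sum.inr q, hq⟩ ↔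
      ∃ i, (Sum.inl i : Fin k ⊕ Fin k) ∉ Y ∧ (Sum.inr i : Fin k ⊕ Fin k) ∉ Y := by
  constructor
  · intro h
    by_contra hc
    push_neg at hc
    have hf : ∀ u v : (Yᶜ : Set (Fin k ⊕ Fin k)),
        ((prism k).induce (Yᶜ : Set (Fin k ⊕ Fin k))).Adj u v →
          (u : Fin k ⊕ Fin k).isLeft = (v : Fin k ⊕ Fin k).isLeft := by
      rintro ⟨(m|m), hu⟩ ⟨(m'|m'), hv⟩ huv
      · rfl
      · exfalso
        have hm : m = m' := huv
        subst hm
        exact hv (hc m hu)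
      · exfalso
        have hm : m = m' := huv
        subst hm
        exact hu (hc m hv)
      · rfl
    have := reach_const hf h
    simp at this
  · rintro ⟨i, hi1, hi2⟩
    have h1 : ((prism k).induce (Yᶜ : Set (Fin k ⊕ Fin k))).Reachable
        ⟨Sum.inl p, hp⟩ ⟨Sum.inl i, hi1⟩ := by
      by_cases hpi : p = i
      · subst hpi; exact Reachable.refl _
      · exact SimpleGraph.Adj.reachable (show p ≠ i from hpi)
    have h2 : ((prism k).induce (Yᶜ : Set (Fin k ⊕ Fin k))).Reachable
        ⟨Sum.inl i, hi1⟩ ⟨Sum.inr i, hi2⟩ :=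
      SimpleGraph.Adj.reachable (show i = i from rfl)
    have h3 : ((prism k).induce (Yᶜ : Set (Fin k ⊕ Fin k))).Reachable
        ⟨Sum.inr i, hi2⟩ ⟨Sum.inr q, hq⟩ := by
      by_cases hiq : i = q
      · subst hiq; exact Reachable.refl _
      · exact SimpleGraph.Adj.reachable (show i ≠ q from hiq)
    exact (h1.trans h2).trans h3

lemma isSep_char (Y : Set (Fin k ⊕ Fin k)) (s t : Fin k ⊕ Fin k) :
    IsSep (prism k) Y s t ↔
      s ∉ Y ∧ t ∉ Y ∧ s.isLeft ≠ t.isLeft ∧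
        ∀ i : Fin k, (Sum.inl i : Fin k ⊕ Fin k) ∈ Y ∨ (Sum.inr i : Fin k ⊕ Fin k) ∈ Y := by
  constructor
  · rintro ⟨hs, ht, hnr⟩
    rcases s with p | p <;> rcases t with q | q
    · exfalso
      apply hnr
      by_cases hpq : p = q
      · subst hpq; exact Reachable.refl _
      · exact SimpleGraph.Adj.reachable (show p ≠ q from hpq)
    · refine ⟨hs, ht, by simp, fun i => ?_⟩
      by_contra hcon
      push_neg at hcon
      exact hnr ((reach_char Y p q hs ht).mpr ⟨i, hcon.1, hcon.2⟩)
    · refine ⟨hs, ht, by simp, fun i => ?_⟩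
      by_contra hcon
      push_neg at hcon
      exact hnr ((reach_char Y q p ht hs).mpr ⟨i, hcon.1, hcon.2⟩).symm
    · exfalso
      apply hnr
      by_cases hpq : p = q
      · subst hpq; exact Reachable.refl _
      · exact SimpleGraph.Adj.reachable (show p ≠ q from hpq)
  · rintro ⟨hs, ht, hside, hcov⟩
    rcases s with p | p <;> rcases t with q | q
    · simp at hside
    · refine ⟨hs, ht, fun h => ?_⟩
      obtain ⟨i, h1, h2⟩ := (reach_char Y p q hs ht).mp h
      rcases hcov i with h' | h' <;> [exact h1 h'; exact h2 h']
    · refine ⟨hs, ht, fun h => ?_⟩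
      obtain ⟨i, h1, h2⟩ := (reach_char Y q p ht hs).mp h.symm
      rcases hcov i with h' | h' <;> [exact h1 h'; exact h2 h']
    · simp at hside

end PrismAux

theorem stmt1 (k : ℕ) (hk : 1 ≤ k) :
    (∀ S : Set (Fin k ⊕ Fin k), IsMinSep (prism k) S ↔
      ∃ J : Set (Fin k), J.Nonempty ∧ J ≠ Set.univ ∧
        S = (Sum.inl '' J) ∪ (Sum.inr '' Jᶜ)) ∧
    {S : Set (Fin k ⊕ Fin k) | IsMinSep (prism k) S}.ncard = 2 ^ k - 2 := by
  have key : ∀ S : Set (Fin k ⊕ Fin k), IsMinSep (prism k) S ↔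
      ∃ J : Set (Fin k), J.Nonempty ∧ J ≠ Set.univ ∧
        S = (Sum.inl '' J) ∪ (Sum.inr '' Jᶜ) := by
    intro S
    constructor
    · rintro ⟨s, t, hsep, hmin⟩
      obtain ⟨hs, ht, hside, hcov⟩ := (isSep_char S s t).mp hsep
      set J : Set (Fin k) := {i | (Sum.inl i : Fin k ⊕ Fin k) ∈ S} with hJ
      have hsub : sepJ k J ⊆ S := by
        rintro (i | i) hx
        · exact mem_sepJ_inl.mp hx
        · have hiJ : i ∉ J := mem_sepJ_inr.mp hx
          rcases hcov i with h | h
          · exact absurd h hiJ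
          · exact h
      have hYsep : IsSep (prism k) (sepJ k J) s t := by
        rw [isSep_char]
        refine ⟨fun h => hs (hsub h), fun h => ht (hsub h), hside, fun i => ?_⟩
        by_cases hi : i ∈ J
        · exact Or.inl (mem_sepJ_inl.mpr hi)
        · exact Or.inr (mem_sepJ_inr.mpr hi)
      have hSeq : sepJ k J = S := hmin _ hsub hYsep
      refine ⟨J, ?_, ?_, hSeq.symm⟩
      · -- nonempty: the inr endpoint gives an element of J
        rcases s with p | p <;> rcases t with q | q
        · simp at hside
        · refine ⟨q, ?_⟩
          rcases hcov q with h | h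
          · exact h
          · exact absurd h ht
        · refine ⟨p, ?_⟩
          rcases hcov p with h | h
          · exact h
          · exact absurd h hs
        · simp at hside
      · -- proper: the inl endpoint is missing from J
        rcases s with p | p <;> rcases t with q | q
        · simp at hside
        · intro h
          exact hs (show p ∈ J by rw [h]; trivial)
        · intro h
          exact ht (show q ∈ J by rw [h]; trivial)
        · simp at hside
    · rintro ⟨J, hne, hnuniv, rfl⟩
      obtain ⟨q, hq⟩ := hne
      obtain ⟨p, hp⟩ : ∃ p, p ∉ J := by
        by_contra hcon
        push_neg at hcon
        exact hnuniv (Set.eq_univ_of_forall hcon)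
      refine ⟨Sum.inl p, Sum.inr q, ?_, ?_⟩
      · rw [show (Sum.inl '' J ∪ Sum.inr '' Jᶜ : Set (Fin k ⊕ Fin k)) = sepJ k J from rfl,
          isSep_char]
        refine ⟨fun h => hp (mem_sepJ_inl.mp h), fun h => (mem_sepJ_inr.mp h) hq,
          by simp, fun i => ?_⟩
        by_cases hi : i ∈ J
        · exact Or.inl (mem_sepJ_inl.mpr hi)
        · exact Or.inr (mem_sepJ_inr.mpr hi)
      · intro Y hYsub hYsep
        obtain ⟨_, _, _, hcovY⟩ := (isSep_char Y _ _).mp hYsep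
        refine subset_antisymm hYsub ?_
        rintro (i | i) hx
        · have hiJ : i ∈ J := mem_sepJ_inl.mp hx
          rcases hcovY i with h | h
          · exact h
          · exact absurd (mem_sepJ_inr.mp (hYsub h)) (not_not_intro hiJ)
        · have hiJ : i ∉ J := mem_sepJ_inr.mp hx
          rcases hcovY i with h | h
          · exact absurd (mem_sepJ_inl.mp (hYsub h)) hiJ
          · exact h
  refine ⟨key, ?_⟩
  have hinj : Function.Injective (sepJ k) := by
    intro J1 J2 h
    ext i
    rw [← mem_sepJ_inl (J := J1), ← mem_sepJ_inl (J := J2), h]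
  have himg : {S : Set (Fin k ⊕ Fin k) | IsMinSep (prism k) S} =
      sepJ k '' {J : Set (Fin k) | J.Nonempty ∧ J ≠ Set.univ} := by
    ext S
    simp only [Set.mem_setOf_eq, Set.mem_image, key]
    constructor
    · rintro ⟨J, h1, h2, rfl⟩; exact ⟨J, ⟨h1, h2⟩, rfl⟩
    · rintro ⟨J, ⟨h1, h2⟩, rfl⟩; exact ⟨J, h1, h2, rfl⟩
  rw [himg, Set.ncard_image_of_injective _ hinj]
  have hset : {J : Set (Fin k) | J.Nonempty ∧ J ≠ Set.univ} =
      ({∅, Set.univ} : Set (Set (Fin k)))ᶜ := by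
    ext J
    simp [Set.nonempty_iff_ne_empty, not_or]
  rw [hset]
  have hne : (∅ : Set (Fin k)) ≠ Set.univ := by
    intro h
    exact (h.symm ▸ Set.mem_univ (⟨0, hk⟩ : Fin k) : (⟨0, hk⟩ : Fin k) ∈ (∅ : Set (Fin k)))
  have h2 : ({∅, Set.univ} : Set (Set (Fin k))).ncard = 2 := Set.ncard_pair hne
  have hcard : Nat.card (Set (Fin k)) = 2 ^ k := by
    simp [Nat.card_eq_fintype_card, Fintype.card_set]
  have hsum := Set.ncard_add_ncard_compl ({∅, Set.univ} : Set (Set (Fin k)))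
  rw [h2, hcard, add_comm] at hsum
  exact Nat.eq_sub_of_add_eq hsum
end

section
/- Let G be a long-hole-free graph, let S be a minimal separator in G, and let A and B be two distinct full components for S (i.e., N(A) = N(B) = S). Suppose v ∈ A is such that for every connected component A' of G[A] − {v}, S \ N(A') is nonempty. Then, letting S' = S \ N(v), the components of G[A] − {v} can be linearly ordered so that their neighborhoods intersected with S' form a chain under inclusion. -/
open SimpleGraph

variable {V : Type*}

/-- `p` is a walk function of length `a` from `x` to `y` inside `W`. -/
def IsPathFun (G : SimpleGraph V) (W : Set V) (x y : V) (p : ℕ → V) (a : ℕ) : Prop :=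
  p 0 = x ∧ p a = y ∧ (∀ i, i < a → G.Adj (p i) (p (i+1))) ∧ (∀ i, i ≤ a → p i ∈ W)

lemma walkFun_of_connected (G : SimpleGraph V) (D : Set V)
    (hc : (G.induce D).Connected) {x y : V} (hx : x ∈ D) (hy : y ∈ D) :
    ∃ a p, IsPathFun G D x y p a := by
  obtain ⟨w⟩ := hc.preconnected ⟨x, hx⟩ ⟨y, hy⟩
  refine ⟨w.length, fun i => (w.getVert i).1, ?_, ?_, ?_, ?_⟩
  · simp [Walk.getVert_zero]
  · simp [Walk.getVert_length]
  · intro i hi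
    have := w.adj_getVert_succ hi
    simpa using this
  · intro i _
    exact (w.getVert i).2

lemma walkFun_extend (G : SimpleGraph V) (D : Set V) {x y a0 a1 : V} {p : ℕ → V} {k : ℕ}
    (hp : IsPathFun G D a0 a1 p k) (hx : G.Adj x a0) (hy : G.Adj y a1) :
    ∃ a q, IsPathFun G (insert x (insert y D)) x y q a := by
  obtain ⟨h0, hk, hadj, hmem⟩ := hp
  refine ⟨k + 2, fun i => if i = 0 then x else if i ≤ k + 1 then p (i - 1) else y,
    ?_, ?_, ?_, ?_⟩
  · simp
  · simp
  · intro i hi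
    rcases Nat.eq_zero_or_pos i with rfl | hipos
    · simpa [h0] using hx
    · rcases Nat.lt_or_ge i (k + 1) with hik | hik
      · have h1 : ¬ (i = 0) := by omega
        have h2 : i ≤ k + 1 := by omega
        have h3 : ¬ (i + 1 = 0) := by omega
        have h4 : i + 1 ≤ k + 1 := by omega
        simp only [h1, h2, h3, h4, if_false, if_true, if_neg, if_pos]
        have := hadj (i - 1) (by omega)
        have hrw : i - 1 + 1 = i + 1 - 1 := by omega
        rwa [hrw] at this
      · have : i = k + 1 := by omega
        subst this
        simp only [Nat.succ_ne_zero, if_false]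
        have h2 : k + 1 ≤ k + 1 := le_refl _
        have h4 : ¬ (k + 2 ≤ k + 1) := by omega
        simp only [h2, if_true, h4, if_false]
        simpa [hk] using hy.symm
  · intro i hi
    rcases Nat.eq_zero_or_pos i with rfl | hipos
    · simp
    · rcases Nat.lt_or_ge i (k + 2) with hik | hik
      · have h1 : ¬ (i = 0) := by omega
        have h2 : i ≤ k + 1 := by omega
        simp only [h1, h2, if_false, if_true]
        exact Set.mem_insert_of_mem _ (Set.mem_insert_of_mem _ (hmem _ (by omega)))
      · have : i = k + 2 := by omega
        subst this
        simp only [Nat.succ_ne_zero, if_false]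
        have h4 : ¬ (k + 2 ≤ k + 1) := by omega
        simp only [h4, if_false]
        exact Set.mem_insert_of_mem _ (Set.mem_insert _ _)

lemma exists_induced_pathFun (G : SimpleGraph V) (W : Set V) (x y : V)
    (h : ∃ a p, IsPathFun G W x y p a) :
    ∃ a p, IsPathFun G W x y p a ∧ (∀ i j, i < j → j ≤ a → p i ≠ p j) ∧
      (∀ i j, i + 1 < j → j ≤ a → ¬ G.Adj (p i) (p j)) := by
  have hex : ∃ a, ∃ p, IsPathFun G W x y p a := h
  classical
  let a := Nat.find hex
  obtain ⟨p, hp⟩ : ∃ p, IsPathFun G W x y p a := Nat.find_spec hex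
  have surg : ∀ i k, i < k → k ≤ a →
      (p k = p i ∨ (G.Adj (p i) (p k) ∧ i + 1 < k)) →
      ∃ m p', m < a ∧ IsPathFun G W x y p' m := by
    intro i k hik hka hcase
    obtain ⟨h0, ha, hadj, hmem⟩ := hp
    rcases hcase with heq | ⟨hAdj, hik2⟩
    · -- drop the segment (i, k]
      refine ⟨a - (k - i), fun m => if m ≤ i then p m else p (m + (k - i)), by omega,
        by simp [h0], ?_, ?_, ?_⟩
      · rcases Nat.lt_or_ge i (a - (k - i)) with hc | hc
        · have h1 : ¬ (a - (k - i) ≤ i) := by omega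
          simp only [h1, if_false]
          have h2 : a - (k - i) + (k - i) = a := by omega
          rw [h2, ha]
        · have hki : k = a := by omega
          have hia : a - (k - i) = i := by omega
          rw [hia]
          simp only [le_refl, if_true]
          rw [← heq, hki, ha]
      · intro m hm
        rcases Nat.lt_or_ge m i with hmi | hmi
        · have h1 : m ≤ i := by omega
          have h2 : m + 1 ≤ i := by omega
          simp only [h1, h2, if_true]
          exact hadj m (by omega)
        · rcases Nat.eq_or_lt_of_le hmi with heq2 | hmi'
          · have hm_eq : m = i := heq2.symm
            subst hm_eq
            simp only [le_refl, if_true]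
            have h2 : ¬ (m + 1 ≤ m) := by omega
            simp only [h2, if_false]
            have e1 : m + 1 + (k - m) = k + 1 := by omega
            rw [e1]
            have := hadj k (by omega)
            rwa [heq] at this
          · have h1 : ¬ (m ≤ i) := by omega
            have h2 : ¬ (m + 1 ≤ i) := by omega
            simp only [h1, h2, if_false]
            have e1 : m + 1 + (k - i) = m + (k - i) + 1 := by omega
            rw [e1]
            exact hadj _ (by omega)
      · intro m hm
        by_cases h1 : m ≤ i
        · simp only [h1, if_true]; exact hmem m (by omega)
        · simp only [h1, if_false]; exact hmem _ (by omega)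
    · -- shortcut the edge
      refine ⟨a - (k - i - 1), fun m => if m ≤ i then p m else p (m + (k - i - 1)),
        by omega, by simp [h0], ?_, ?_, ?_⟩
      · have h1 : ¬ (a - (k - i - 1) ≤ i) := by omega
        simp only [h1, if_false]
        have h2 : a - (k - i - 1) + (k - i - 1) = a := by omega
        rw [h2, ha]
      · intro m hm
        rcases Nat.lt_or_ge m i with hmi | hmi
        · have h1 : m ≤ i := by omega
          have h2 : m + 1 ≤ i := by omega
          simp only [h1, h2, if_true]
          exact hadj m (by omega)
        · rcases Nat.eq_or_lt_of_le hmi with heq2 | hmi'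
          · have hm_eq : m = i := heq2.symm
            subst hm_eq
            simp only [le_refl, if_true]
            have h2 : ¬ (m + 1 ≤ m) := by omega
            simp only [h2, if_false]
            have e1 : m + 1 + (k - m - 1) = k := by omega
            rw [e1]
            exact hAdj
          · have h1 : ¬ (m ≤ i) := by omega
            have h2 : ¬ (m + 1 ≤ i) := by omega
            simp only [h1, h2, if_false]
            have e1 : m + 1 + (k - i - 1) = m + (k - i - 1) + 1 := by omega
            rw [e1]
            exact hadj _ (by omega)
      · intro m hm
        by_cases h1 : m ≤ i
        · simp only [h1, if_true]; exact hmem m (by omega)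
        · simp only [h1, if_false]; exact hmem _ (by omega)
  refine ⟨a, p, hp, ?_, ?_⟩
  · intro i j hij hja hne
    obtain ⟨m, p', hm, hp'⟩ := surg i j hij hja (Or.inl hne.symm)
    exact Nat.find_min hex hm ⟨p', hp'⟩
  · intro i j hij hja hAdj
    obtain ⟨m, p', hm, hp'⟩ := surg i j (by omega) hja (Or.inr ⟨hAdj, hij⟩)
    exact Nat.find_min hex hm ⟨p', hp'⟩

/-- Key construction: an induced path from `x` to `y` whose interior lies in the
connected set `D`, given that both `x` and `y` have neighbors in `D`. -/
lemma exists_nice_path (G : SimpleGraph V) (D : Set V) (x y : V)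
    (hc : (G.induce D).Connected) (hx : ∃ d ∈ D, G.Adj x d) (hy : ∃ d ∈ D, G.Adj y d)
    (hxD : x ∉ D) (hyD : y ∉ D) (hxy : x ≠ y) :
    ∃ (a : ℕ) (p : ℕ → V), 1 ≤ a ∧ p 0 = x ∧ p a = y ∧ (∀ i, i < a → G.Adj (p i) (p (i+1))) ∧
      (∀ i j, i < j → j ≤ a → p i ≠ p j) ∧
      (∀ i j, i + 1 < j → j ≤ a → ¬ G.Adj (p i) (p j)) ∧
      (∀ i, 0 < i → i < a → p i ∈ D) := by
  obtain ⟨a0, ha0, hxa0⟩ := hx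
  obtain ⟨a1, ha1, hya1⟩ := hy
  obtain ⟨k, q, hq⟩ := walkFun_of_connected G D hc ha0 ha1
  obtain ⟨a, p, hp, hinj, hind⟩ := exists_induced_pathFun G (insert x (insert y D)) x y
    (walkFun_extend G D hq hxa0 hya1)
  obtain ⟨h0, ha, hadj, hmem⟩ := hp
  have h1a : 1 ≤ a := by
    rcases Nat.eq_zero_or_pos a with rfl | h
    · exact absurd (h0 ▸ ha) hxy
    · exact h
  refine ⟨a, p, h1a, h0, ha, hadj, hinj, hind, ?_⟩
  intro i h0i hia
  have := hmem i (by omega)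
  rcases this with h | h | h
  · exact absurd (h0.trans h.symm) (hinj 0 i h0i (by omega))
  · exact absurd (h.trans ha.symm) (fun hh => hinj i a hia (le_refl _) hh)
  · exact h

lemma IsCompOf.closure {G : SimpleGraph V} {X D : Set V} (hD : IsCompOf G X D)
    {p : ℕ → V} {a : ℕ} (hadj : ∀ i, i < a → G.Adj (p i) (p (i+1)))
    (hmem : ∀ i, i ≤ a → p i ∉ X) (h0 : p 0 ∈ D) : ∀ i, i ≤ a → p i ∈ D := by
  intro i
  induction i with
  | zero => exact fun _ => h0
  | succ n ih =>
    intro hn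
    exact hD.2.2.2 (p n) (ih (by omega)) _ (hmem _ hn) (hadj n (by omega))

lemma IsCompOf.eq_of_mem {G : SimpleGraph V} {X D1 D2 : Set V}
    (h1 : IsCompOf G X D1) (h2 : IsCompOf G X D2) {u : V} (hu1 : u ∈ D1) (hu2 : u ∈ D2) :
    D1 = D2 := by
  have key : ∀ (E1 E2 : Set V), IsCompOf G X E1 → IsCompOf G X E2 → u ∈ E1 → u ∈ E2 →
      E1 ⊆ E2 := by
    intro E1 E2 hE1 hE2 huE1 huE2 d hd
    obtain ⟨a, p, hp⟩ := walkFun_of_connected G E1 hE1.2.2.1 huE1 hd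
    obtain ⟨h0, ha, hadj, hmem⟩ := hp
    have := hE2.closure hadj (fun i hi => hE1.2.1 (hmem i hi)) (h0 ▸ huE2)
    exact ha ▸ this a (le_refl _)
  exact le_antisymm (key D1 D2 h1 h2 hu1 hu2) (key D2 D1 h2 h1 hu2 hu1)

lemma IsCompOf.not_adj {G : SimpleGraph V} {X D1 D2 : Set V}
    (h1 : IsCompOf G X D1) (h2 : IsCompOf G X D2) (hne : D1 ≠ D2)
    {u w : V} (hu : u ∈ D1) (hw : w ∈ D2) : ¬ G.Adj u w := by
  intro hadj
  have hwX : w ∉ X := h2.2.1 hw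
  have : w ∈ D1 := h1.2.2.2 u hu w hwX hadj
  exact hne (h1.eq_of_mem h2 this hw)

lemma IsCompOf.disjoint {G : SimpleGraph V} {X D1 D2 : Set V}
    (h1 : IsCompOf G X D1) (h2 : IsCompOf G X D2) (hne : D1 ≠ D2)
    {u : V} (hu : u ∈ D1) : u ∉ D2 :=
  fun hu2 => hne (h1.eq_of_mem h2 hu hu2)

/-- If `D` is connected, `D1 ⊆ D` is nonempty and `D \ D1` is nonempty, then there is
an edge from `D1` to `D \ D1`. -/
lemma exists_cross_edge (G : SimpleGraph V) (D D1 : Set V)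
    (hc : (G.induce D).Connected) (hsub : D1 ⊆ D)
    {s t : V} (hs : s ∈ D1) (ht : t ∈ D) (ht1 : t ∉ D1) :
    ∃ u ∈ D1, ∃ w ∈ D, w ∉ D1 ∧ G.Adj u w := by
  obtain ⟨a, p, h0, ha, hadj, hmem⟩ := walkFun_of_connected G D hc (hsub hs) ht
  classical
  have hex : ∃ i, i ≤ a ∧ p i ∉ D1 := ⟨a, le_refl _, ha ▸ ht1⟩
  have hex' : ∃ i, i ≤ a ∧ p i ∉ D1 := hex
  let j := Nat.find hex'
  obtain ⟨hja, hjD1⟩ : j ≤ a ∧ p j ∉ D1 := Nat.find_spec hex'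
  have hj0 : j ≠ 0 := by
    intro h
    rw [h] at hjD1
    exact hjD1 (h0 ▸ hs)
  have hprev : p (j - 1) ∈ D1 := by
    by_contra hcon
    exact Nat.find_min hex' (m := j - 1) (by omega) ⟨by omega, hcon⟩
  refine ⟨p (j - 1), hprev, p j, hmem j hja, hjD1, ?_⟩
  have := hadj (j - 1) (by omega)
  have e1 : j - 1 + 1 = j := by omega
  rwa [e1] at this

/-- Build an induced-cycle embedding from a function with cycle adjacency structure. -/
lemma mk_cycle_embedding (G : SimpleGraph V) (n : ℕ) (hn : 3 ≤ n) (f : ℕ → V)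
    (hinj : ∀ i j, i < j → j < n → f i ≠ f j)
    (hadj : ∀ i j, i < j → j < n → (G.Adj (f i) (f j) ↔ (j = i + 1 ∨ (i = 0 ∧ j = n - 1)))) :
    Nonempty (SimpleGraph.cycleGraph n ↪g G) := by
  have hfin : Function.Injective (fun i : Fin n => f i.val) := by
    intro i j hij
    simp only at hij
    rcases lt_trichotomy i.val j.val with h | h | h
    · exact absurd hij (hinj _ _ h j.isLt)
    · exact Fin.ext h
    · exact absurd hij.symm (hinj _ _ h i.isLt)
  -- characterize cycleGraph adjacency for i < j
  have hcyc : ∀ i j : Fin n, i.val < j.val →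
      ((cycleGraph n).Adj i j ↔ (j.val = i.val + 1 ∨ (i.val = 0 ∧ j.val = n - 1))) := by
    intro i j hij
    rw [SimpleGraph.cycleGraph_adj']
    have hi := i.isLt
    have hj := j.isLt
    have hsub1 : (j - i).val = (n - i.val + j.val) % n := by
      rw [Fin.sub_def]
    have hsub2 : (i - j).val = (n - j.val + i.val) % n := by
      rw [Fin.sub_def]
    rw [hsub1, hsub2]
    have e1 : (n - i.val + j.val) % n = j.val - i.val := by
      have : n - i.val + j.val = (j.val - i.val) + n := by omega
      rw [this, Nat.add_mod_right]
      exact Nat.mod_eq_of_lt (by omega)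
    have e2 : (n - j.val + i.val) % n = n - j.val + i.val :=
      Nat.mod_eq_of_lt (by omega)
    rw [e1, e2]
    omega
  refine ⟨⟨⟨fun i : Fin n => f i.val, hfin⟩, ?_⟩⟩
  intro i j
  simp only [Function.Embedding.coeFn_mk]
  rcases lt_trichotomy i.val j.val with h | h | h
  · rw [hcyc i j h, ← hadj i.val j.val h j.isLt]
  · have : i = j := Fin.ext h
    subst this
    exact iff_of_false (G.irrefl) ((cycleGraph n).irrefl)
  · rw [G.adj_comm (f i.val) (f j.val), (cycleGraph n).adj_comm i j,
      hcyc j i h, ← hadj j.val i.val h i.isLt]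

theorem stmt5' (G : SimpleGraph V)
    (hG : ∀ n, 5 ≤ n → IsEmpty (SimpleGraph.cycleGraph n ↪g G))
    (S A B : Set V)
    (hA : IsFullComp G S A) (hB : IsFullComp G S B) (hAB : A ≠ B)
    (v : V) (hv : v ∈ A) :
    IsChain (· ⊆ ·)
      {T : Set V | ∃ A', IsCompOf G ((A \ {v})ᶜ) A' ∧
        T = nbhdSet G A' ∩ (S \ G.neighborSet v)} := by
  rintro T1 ⟨A1, hA1, rfl⟩ T2 ⟨A2, hA2, rfl⟩ hne
  by_contra hcon
  push_neg at hcon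
  obtain ⟨hns1, hns2⟩ := hcon
  obtain ⟨x, hx1, hx2⟩ := Set.not_subset.mp hns1
  obtain ⟨y, hy1, hy2⟩ := Set.not_subset.mp hns2
  obtain ⟨hxN1, hxS, hxv⟩ : x ∈ nbhdSet G A1 ∧ x ∈ S ∧ x ∉ G.neighborSet v :=
    ⟨hx1.1, hx1.2.1, hx1.2.2⟩
  obtain ⟨hyN2, hyS, hyv⟩ : y ∈ nbhdSet G A2 ∧ y ∈ S ∧ y ∉ G.neighborSet v :=
    ⟨hy1.1, hy1.2.1, hy1.2.2⟩
  have hxN2 : x ∉ nbhdSet G A2 := fun h => hx2 ⟨h, hx1.2⟩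
  have hyN1 : y ∉ nbhdSet G A1 := fun h => hy2 ⟨h, hy1.2⟩
  have hAcomp : IsCompOf G S A := hA.1
  have hBcomp : IsCompOf G S B := hB.1
  have hBS : nbhdSet G B = S := hB.2
  have hASc : A ⊆ Sᶜ := hAcomp.2.1
  have hBSc : B ⊆ Sᶜ := hBcomp.2.1
  have hA1sub : A1 ⊆ A \ {v} := by simpa using hA1.2.1
  have hA2sub : A2 ⊆ A \ {v} := by simpa using hA2.2.1
  have hA1A : A1 ⊆ A := fun u hu => (hA1sub hu).1
  have hA2A : A2 ⊆ A := fun u hu => (hA2sub hu).1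
  have hA1ne2 : A1 ≠ A2 := by rintro rfl; exact hne rfl
  have hxA : x ∉ A := fun h => (hASc h) hxS
  have hyA : y ∉ A := fun h => (hASc h) hyS
  have hxB : x ∉ B := fun h => (hBSc h) hxS
  have hyB : y ∉ B := fun h => (hBSc h) hyS
  have hvS : v ∉ S := fun h => (hASc hv) h
  have hvB : v ∉ B := IsCompOf.disjoint hAcomp hBcomp hAB hv
  have hxy : x ≠ y := by
    rintro rfl
    exact hxN2 hyN2
  have hnadj_xv : ¬ G.Adj x v := fun h => hxv (h.symm : G.Adj v x)
  have hnadj_vy : ¬ G.Adj v y := fun h => hyv h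
  -- non-adjacency between sets
  have hnadjA1A2 : ∀ u ∈ A1, ∀ w ∈ A2, ¬ G.Adj u w :=
    fun u hu w hw => IsCompOf.not_adj hA1 hA2 hA1ne2 hu hw
  have hnadjAB : ∀ u ∈ A, ∀ w ∈ B, ¬ G.Adj u w :=
    fun u hu w hw => IsCompOf.not_adj hAcomp hBcomp hAB hu hw
  have hnadj_xA2 : ∀ w ∈ A2, ¬ G.Adj x w := by
    intro w hw hadj
    exact hxN2 ⟨fun h => hxA (hA2A h), w, hw, hadj⟩
  have hnadj_yA1 : ∀ w ∈ A1, ¬ G.Adj y w := by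
    intro w hw hadj
    exact hyN1 ⟨fun h => hyA (hA1A h), w, hw, hadj⟩
  have hdisjA1A2 : ∀ u ∈ A1, u ∉ A2 := fun u hu => IsCompOf.disjoint hA1 hA2 hA1ne2 hu
  have hdisjAB : ∀ u ∈ A, u ∉ B := fun u hu => IsCompOf.disjoint hAcomp hBcomp hAB hu
  -- v has a neighbor in A1 and A2
  have hvnbr : ∀ (C : Set V), IsCompOf G ((A \ {v})ᶜ) C → ∃ d ∈ C, G.Adj v d := by
    intro C hC
    have hCsub : C ⊆ A \ {v} := by simpa using hC.2.1
    obtain ⟨s, hs⟩ := hC.1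
    obtain ⟨u, hu, w, hwA, hwC, huw⟩ :=
      exists_cross_edge G A C hAcomp.2.2.1 (fun z hz => (hCsub hz).1) hs hv
        (fun h => (hCsub h).2 rfl)
    have hwv : w = v := by
      by_contra hwv
      exact hwC (hC.2.2.2 u hu w (by simp [hwA, hwv]) huw)
    exact ⟨u, hu, hwv ▸ huw.symm⟩
  obtain ⟨d1, hd1, hvd1⟩ := hvnbr A1 hA1
  obtain ⟨d2, hd2, hvd2⟩ := hvnbr A2 hA2
  -- the three induced paths
  obtain ⟨a, p, ha1, hp0, hpa, hp_adj, hp_inj, hp_ind, hp_int⟩ :=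
    exists_nice_path G A1 x v hA1.2.2.1 hxN1.2 ⟨d1, hd1, hvd1⟩
      (fun h => hxA (hA1A h)) (fun h => (hA1sub h).2 rfl) (fun h => hxA (h ▸ hv))
  obtain ⟨b, q, hb1, hq0, hqb, hq_adj, hq_inj, hq_ind, hq_int⟩ :=
    exists_nice_path G A2 v y hA2.2.2.1 ⟨d2, hd2, hvd2⟩
      ⟨_, hyN2.2.choose_spec.1, hyN2.2.choose_spec.2⟩
      (fun h => (hA2sub h).2 rfl) (fun h => hyA (hA2A h)) (fun h => hyA (h ▸ hv))
  obtain ⟨c, r, hc1, hr0, hrc, hr_adj, hr_inj, hr_ind, hr_int⟩ :=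
    exists_nice_path G B y x hBcomp.2.2.1 (hBS ▸ hyS : y ∈ nbhdSet G B).2
      (hBS ▸ hxS : x ∈ nbhdSet G B).2 hyB hxB hxy.symm
  have ha2 : 2 ≤ a := by
    rcases Nat.lt_or_ge a 2 with h | h
    · interval_cases a
      · exact absurd (hp0 ▸ hpa ▸ hp_adj 0 (by omega)) hnadj_xv
    · exact h
  have hb2 : 2 ≤ b := by
    rcases Nat.lt_or_ge b 2 with h | h
    · interval_cases b
      · exact absurd (hq0 ▸ hqb ▸ hq_adj 0 (by omega)) hnadj_vy
    · exact h
  set n := a + b + c with hn_def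
  have hn5 : 5 ≤ n := by omega
  set f : ℕ → V := fun i => if i ≤ a then p i else if i ≤ a + b then q (i - a) else r (i - a - b)
    with hf_def
  have hf1 : ∀ i, i ≤ a → f i = p i := by
    intro i hi; simp only [hf_def, hi, if_true]
  have hf2 : ∀ i, a ≤ i → i ≤ a + b → f i = q (i - a) := by
    intro i hi1 hi2
    rcases Nat.eq_or_lt_of_le hi1 with h | h
    · subst h
      simp only [hf_def, le_refl, if_true, Nat.sub_self]
      rw [hpa, hq0]
    · have h1 : ¬ (i ≤ a) := by omega
      simp only [hf_def, h1, if_false, hi2, if_true]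
  have hf3 : ∀ i, a + b ≤ i → f i = r (i - a - b) := by
    intro i hi
    rcases Nat.eq_or_lt_of_le hi with h | h
    · subst h
      rw [hf2 _ (by omega) (le_refl _)]
      have e2 : a + b - a - b = 0 := by omega
      have e1 : a + b - a = b := by omega
      rw [e2, hr0, e1, hqb]
    · have h1 : ¬ (i ≤ a) := by omega
      have h2 : ¬ (i ≤ a + b) := by omega
      simp only [hf_def, h1, h2, if_false]
  -- membership classification
  have hmem1 : ∀ i, 0 < i → i < a → f i ∈ A1 := by
    intro i h1 h2; rw [hf1 i (by omega)]; exact hp_int i h1 h2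
  have hmem2 : ∀ i, a < i → i < a + b → f i ∈ A2 := by
    intro i h1 h2; rw [hf2 i (by omega) (by omega)]; exact hq_int (i - a) (by omega) (by omega)
  have hmem3 : ∀ i, a + b < i → i < n → f i ∈ B := by
    intro i h1 h2; rw [hf3 i (by omega)]; exact hr_int (i - a - b) (by omega) (by omega)
  have hf_0 : f 0 = x := by rw [hf1 0 (by omega)]; exact hp0
  have hf_a : f a = v := by rw [hf1 a (le_refl _)]; exact hpa
  have hf_ab : f (a + b) = y := by
    rw [hf2 _ (by omega) (le_refl _)]
    have : a + b - a = b := by omega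
    rw [this, hqb]
  -- injectivity
  have hinj : ∀ i j, i < j → j < n → f i ≠ f j := by
    intro i j hij hjn
    by_cases hja : j ≤ a
    · rw [hf1 i (by omega), hf1 j hja]
      exact hp_inj i j hij hja
    · by_cases hia : a ≤ i
      · by_cases hjb : j ≤ a + b
        · rw [hf2 i hia (by omega), hf2 j (by omega) hjb]
          exact hq_inj (i - a) (j - a) (by omega) (by omega)
        · by_cases hib : a + b ≤ i
          · rw [hf3 i hib, hf3 j (by omega)]
            exact hr_inj (i - a - b) (j - a - b) (by omega) (by omega)
          · -- a ≤ i < a + b, j > a + b : f j ∈ B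
            have hfj : f j ∈ B := hmem3 j (by omega) hjn
            rcases Nat.eq_or_lt_of_le hia with h | h
            · rw [← h, hf_a]; exact fun he => hvB (he ▸ hfj)
            · have hfi : f i ∈ A2 := hmem2 i h (by omega)
              exact fun he => hdisjAB _ (hA2A hfi) (he ▸ hfj)
      · -- i < a < j
        push_neg at hia
        by_cases hjb : j < a + b
        · -- f j ∈ A2
          have hfj : f j ∈ A2 := hmem2 j (by omega) hjb
          rcases Nat.eq_zero_or_pos i with rfl | hipos
          · rw [hf_0]; exact fun he => hxA (hA2A (he ▸ hfj))
          · have hfi : f i ∈ A1 := hmem1 i hipos hia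
            exact fun he => hdisjA1A2 _ hfi (he ▸ hfj)
        · by_cases hjab : j = a + b
          · subst hjab
            rw [hf_ab]
            rcases Nat.eq_zero_or_pos i with rfl | hipos
            · rw [hf_0]; exact hxy
            · have hfi : f i ∈ A1 := hmem1 i hipos hia
              exact fun he => hyA (hA1A (he ▸ hfi))
          · -- j > a + b : f j ∈ B
            have hfj : f j ∈ B := hmem3 j (by omega) hjn
            rcases Nat.eq_zero_or_pos i with rfl | hipos
            · rw [hf_0]; exact fun he => hxB (he ▸ hfj)
            · have hfi : f i ∈ A1 := hmem1 i hipos hia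
              exact fun he => hdisjAB _ (hA1A hfi) (he ▸ hfj)
  -- adjacency characterization
  have hadjchar : ∀ i j, i < j → j < n →
      (G.Adj (f i) (f j) ↔ (j = i + 1 ∨ (i = 0 ∧ j = n - 1))) := by
    intro i j hij hjn
    constructor
    · -- no chords
      intro hGadj
      by_contra hcon2
      push_neg at hcon2
      obtain ⟨hji1, hwrap⟩ := hcon2
      have hij2 : i + 2 ≤ j := by omega
      by_cases hja : j ≤ a
      · rw [hf1 i (by omega), hf1 j hja] at hGadj
        exact hp_ind i j (by omega) hja hGadj
      · by_cases hia : a ≤ i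
        · by_cases hjb : j ≤ a + b
          · rw [hf2 i hia (by omega), hf2 j (by omega) hjb] at hGadj
            exact hq_ind (i - a) (j - a) (by omega) (by omega) hGadj
          · by_cases hib : a + b ≤ i
            · rw [hf3 i hib, hf3 j (by omega)] at hGadj
              exact hr_ind (i - a - b) (j - a - b) (by omega) (by omega) hGadj
            · have hfj : f j ∈ B := hmem3 j (by omega) hjn
              rcases Nat.eq_or_lt_of_le hia with h | h
              · rw [← h, hf_a] at hGadj
                exact hnadjAB v hv _ hfj hGadj
              · have hfi : f i ∈ A2 := hmem2 i h (by omega)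
                exact hnadjAB _ (hA2A hfi) _ hfj hGadj
        · push_neg at hia
          by_cases hjb : j < a + b
          · have hfj : f j ∈ A2 := hmem2 j (by omega) hjb
            rcases Nat.eq_zero_or_pos i with rfl | hipos
            · rw [hf_0] at hGadj
              exact hnadj_xA2 _ hfj hGadj
            · have hfi : f i ∈ A1 := hmem1 i hipos hia
              exact hnadjA1A2 _ hfi _ hfj hGadj
          · rcases Nat.eq_zero_or_pos i with rfl | hipos
            · -- i = 0, j ≥ a + b, j ≤ n - 2 : use seg3 inducedness, f 0 = x = r c
              have hjn2 : j ≤ n - 2 := by omega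
              have hjc : j - a - b + 1 < c := by omega
              rw [hf_0, hf3 j (by omega)] at hGadj
              have : G.Adj (r (j - a - b)) (r c) := by
                have hx_rc : r c = x := hrc
                rw [hx_rc]; exact hGadj.symm
              exact hr_ind (j - a - b) c hjc (le_refl _) this
            · have hfi : f i ∈ A1 := hmem1 i hipos hia
              by_cases hjab : j = a + b
              · subst hjab
                rw [hf_ab] at hGadj
                exact hnadj_yA1 _ hfi hGadj.symm
              · have hfj : f j ∈ B := hmem3 j (by omega) hjn
                exact hnadjAB _ (hA1A hfi) _ hfj hGadj
    · -- consecutive and wrap edges exist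
      rintro (rfl | ⟨rfl, rfl⟩)
      · by_cases hia : i + 1 ≤ a
        · rw [hf1 i (by omega), hf1 (i+1) hia]
          exact hp_adj i (by omega)
        · by_cases hib : i + 1 ≤ a + b
          · rw [hf2 i (by omega) (by omega), hf2 (i+1) (by omega) hib]
            have e1 : i + 1 - a = (i - a) + 1 := by omega
            rw [e1]
            exact hq_adj (i - a) (by omega)
          · rw [hf3 i (by omega), hf3 (i+1) (by omega)]
            have e1 : i + 1 - a - b = (i - a - b) + 1 := by omega
            rw [e1]
            exact hr_adj (i - a - b) (by omega)
      · rw [hf_0, hf3 (n - 1) (by omega)]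
        have e1 : n - 1 - a - b = c - 1 := by omega
        rw [e1]
        have := hr_adj (c - 1) (by omega)
        have e2 : c - 1 + 1 = c := by omega
        rw [e2, hrc] at this
        exact this.symm
  obtain ⟨emb⟩ := mk_cycle_embedding G n (by omega) f hinj hadjchar
  exact (hG n hn5).false emb

theorem stmt5 [Fintype V] (G : SimpleGraph V) (hG : LongHoleFree G)
    (S A B : Set V) (hS : IsMinSep G S)
    (hA : IsFullComp G S A) (hB : IsFullComp G S B) (hAB : A ≠ B)
    (v : V) (hv : v ∈ A)
    (hcomps : ∀ A', IsCompOf G ((A \ {v})ᶜ) A' → (S \ nbhdSet G A').Nonempty) :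
    IsChain (· ⊆ ·)
      {T : Set V | ∃ A', IsCompOf G ((A \ {v})ᶜ) A' ∧
        T = nbhdSet G A' ∩ (S \ G.neighborSet v)} := by
  exact stmt5' G hG S A B hA hB hAB v hv
end

section
/- Let k ≥ 2 and let G be a long-hole-free graph with no induced k-prism. Let S be a minimal separator with two distinct full components A, B (N(A) = N(B) = S). If v ∈ A is such that every connected component A' of G[A] − {v} satisfies S \ N(A') ≠ ∅, then there exists a set Z ⊆ A ∩ N[v] with v ∈ Z, |Z| ≤ k, and S ⊆ N(Z). -/
open SimpleGraph

variable {V : Type*}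

section Chains
variable {G : SimpleGraph V}

/-- A chain of adjacent vertices, as an indexing function. -/
structure ChainFn (G : SimpleGraph V) (W : Set V) (x y : V) (m : ℕ) (f : ℕ → V) : Prop where
  pos : 0 < m
  headx : f 0 = x
  lasty : f (m - 1) = y
  mem : ∀ i, i < m → f i ∈ W
  chain : ∀ i, i + 1 < m → G.Adj (f i) (f (i + 1))

lemma ChainFn.single {W : Set V} {x : V} (hx : x ∈ W) :
    ChainFn G W x x 1 (fun _ => x) :=
  ⟨by omega, rfl, rfl, fun i _ => hx, fun i h => by omega⟩

lemma ChainFn.mono {W W' : Set V} {x y m f} (h : ChainFn G W x y m f) (hWW : W ⊆ W') :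
    ChainFn G W' x y m f :=
  ⟨h.pos, h.headx, h.lasty, fun i hi => hWW (h.mem i hi), h.chain⟩

lemma ChainFn.join {W : Set V} {x y y' z : V} {m m' : ℕ} {f f' : ℕ → V}
    (h1 : ChainFn G W x y m f) (h2 : ChainFn G W y' z m' f') (hadj : G.Adj y y') :
    ChainFn G W x z (m + m') (fun n => if n < m then f n else f' (n - m)) := by
  have p1 := h1.pos; have p2 := h2.pos
  refine ⟨by omega, by simp [if_pos p1, h1.headx], ?_, ?_, ?_⟩
  · have : ¬ (m + m' - 1 < m) := by omega
    simp only [this, if_false]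
    have : m + m' - 1 - m = m' - 1 := by omega
    rw [this, h2.lasty]
  · intro i hi
    by_cases h : i < m
    · simp only [if_pos h]; exact h1.mem i h
    · simp only [if_neg h]; exact h2.mem (i - m) (by omega)
  · intro i hi
    by_cases h : i + 1 < m
    · simp only [if_pos h, if_pos (by omega : i < m)]
      exact h1.chain i h
    · by_cases h' : i < m
      · have him : i = m - 1 := by omega
        simp only [if_pos h', if_neg h]
        have : i + 1 - m = 0 := by omega
        rw [this, h2.headx, him, h1.lasty]
        exact hadj
      · simp only [if_neg h, if_neg h']
        have e1 : i + 1 - m = (i - m) + 1 := by omega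
        rw [e1]
        exact h2.chain (i - m) (by omega)

lemma ChainFn.snoc {W : Set V} {x y z : V} {m : ℕ} {f : ℕ → V}
    (h1 : ChainFn G W x y m f) (hz : z ∈ W) (hadj : G.Adj y z) :
    ChainFn G W x z (m + 1) (fun n => if n < m then f n else z) := by
  have := h1.join (ChainFn.single hz) hadj
  convert this using 2

lemma ChainFn.cons {W : Set V} {x y z : V} {m : ℕ} {f : ℕ → V}
    (h1 : ChainFn G W y z m f) (hx : x ∈ W) (hadj : G.Adj x y) :
    ChainFn G W x z (1 + m) (fun n => if n < 1 then x else f (n - 1)) :=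
  (ChainFn.single hx).join h1 (by exact hadj)

/-- Walks in induced subgraphs give chains. -/
lemma ChainFn.ofWalk {W : Set V} {a b : ↥W} (w : (G.induce W).Walk a b) :
    ∃ m f, ChainFn G W (a : V) (b : V) m f := by
  induction w with
  | nil => exact ⟨1, _, ChainFn.single (Subtype.mem _)⟩
  | @cons u c d h w ih =>
    obtain ⟨m, f, hf⟩ := ih
    have hadj : G.Adj (u : V) (c : V) := h
    exact ⟨1 + m, _, hf.cons (Subtype.mem _) hadj⟩

lemma exists_chainFn_of_connected {W : Set V} (hconn : (G.induce W).Connected)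
    {a b : V} (ha : a ∈ W) (hb : b ∈ W) : ∃ m f, ChainFn G W a b m f := by
  obtain ⟨w⟩ := hconn.preconnected ⟨a, ha⟩ ⟨b, hb⟩
  exact ChainFn.ofWalk w

end Chains

section Comps
variable {G : SimpleGraph V}

lemma comp_absorb {X C D : Set V} (hD : IsCompOf G X D) (hC : C ⊆ Xᶜ) {a b : ↥C}
    (w : (G.induce C).Walk a b) (ha : (a : V) ∈ D) : (b : V) ∈ D := by
  induction w with
  | nil => exact ha
  | @cons u c d h w ih =>
    have hadj : G.Adj (u : V) (c : V) := h
    exact ih (hD.2.2.2 _ ha _ (hC c.2) hadj)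

lemma comp_eq_s6 {X C D : Set V} (hC : IsCompOf G X C) (hD : IsCompOf G X D) {x : V}
    (hxC : x ∈ C) (hxD : x ∈ D) : C = D := by
  have key : ∀ (C' D' : Set V), IsCompOf G X C' → IsCompOf G X D' → x ∈ C' → x ∈ D' →
      C' ⊆ D' := by
    intro C' D' hC' hD' hxC' hxD' u hu
    obtain ⟨w⟩ := hC'.2.2.1.preconnected ⟨x, hxC'⟩ ⟨u, hu⟩
    exact comp_absorb hD' hC'.2.1 w hxD'
  exact Set.Subset.antisymm (key C D hC hD hxC hxD) (key D C hD hC hxD hxC)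

lemma comp_nonadj {X C D : Set V} (hC : IsCompOf G X C) (hD : IsCompOf G X D)
    (hne : C ≠ D) {a b : V} (ha : a ∈ C) (hb : b ∈ D) : a ≠ b ∧ ¬ G.Adj a b := by
  constructor
  · rintro rfl
    exact hne (comp_eq_s6 hC hD ha hb)
  · intro hadj
    have hbC : b ∈ C := hC.2.2.2 a ha b (hD.2.1 hb) hadj
    exact hne (comp_eq_s6 hC hD hbC hb)

lemma exists_comp (X : Set V) {a : V} (ha : a ∉ X) :
    ∃ D, IsCompOf G X D ∧ a ∈ D := by
  classical
  set D : Set V := Subtype.val '' {w : ↥(Xᶜ : Set V) | (G.induce (Xᶜ : Set V)).Reachable w ⟨a, ha⟩}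
    with hDdef
  have haD : a ∈ D := ⟨⟨a, ha⟩, Reachable.refl _, rfl⟩
  have hDsub : D ⊆ Xᶜ := by
    rintro u ⟨u', _, rfl⟩; exact u'.2
  have hclose : ∀ u ∈ D, ∀ w, w ∉ X → G.Adj u w → w ∈ D := by
    rintro u ⟨u', hu', rfl⟩ w hw hadj
    refine ⟨⟨w, hw⟩, ?_, rfl⟩
    have hedge : (G.induce (Xᶜ : Set V)).Adj ⟨w, hw⟩ u' := hadj.symm
    exact hedge.reachable.trans hu'
  refine ⟨D, ⟨⟨a, haD⟩, hDsub, ?_, hclose⟩, haD⟩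
  rw [connected_iff]
  refine ⟨?_, ⟨⟨a, haD⟩⟩⟩
  -- preconnected: every point of D reaches a within D
  have key : ∀ (u b : ↥(Xᶜ : Set V)) (w : (G.induce (Xᶜ : Set V)).Walk u b)
      (hb : (b : V) ∈ D) (hu : (u : V) ∈ D),
      (G.induce D).Reachable ⟨u, hu⟩ ⟨b, hb⟩ := by
    intro u b w
    induction w with
    | nil => intro _ _; rfl
    | @cons p c q h w ih =>
      intro hb hp
      have hcD : (c : V) ∈ D := by
        obtain ⟨b', hb', hbe⟩ := hb
        refine ⟨c, ?_, rfl⟩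
        have : q = b' := Subtype.ext hbe.symm
        exact (w.reachable.trans (this ▸ hb' : (G.induce _).Reachable q ⟨a, ha⟩))
      have hedge : (G.induce D).Adj ⟨(p : V), hp⟩ ⟨(c : V), hcD⟩ := h
      exact hedge.reachable.trans (ih hb hcD)
  rintro ⟨u, hu⟩ ⟨w, hw⟩
  have hu' := hu
  have hw' := hw
  obtain ⟨u', hur, rfl⟩ := hu'
  obtain ⟨w', hwr, rfl⟩ := hw'
  obtain ⟨wk⟩ := hur
  obtain ⟨wk2⟩ := hwr
  exact (key u' ⟨a, ha⟩ wk haD hu).trans (key w' ⟨a, ha⟩ wk2 haD hw).symm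

/-- If `D` is a component of `G - X`, `A ⊇ D` is connected, and `v ∈ A \ D` is the only
possible exit of `D` inside `A`, then `v` has a neighbor in `D`. -/
lemma comp_attach {D A : Set V} (hconn : (G.induce A).Connected) (hDA : D ⊆ A)
    {v : V} (hv : v ∈ A) (hvD : v ∉ D) (hDne : D.Nonempty)
    (hexit : ∀ u ∈ D, ∀ w ∈ A, G.Adj u w → w ∉ D → w = v) :
    ∃ u ∈ D, G.Adj u v := by
  obtain ⟨a0, ha0⟩ := hDne
  have key : ∀ (u b : ↥A) (w : (G.induce A).Walk u b), (b : V) = v → (u : V) ∈ D →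
      ∃ z ∈ D, G.Adj z v := by
    intro u b w
    induction w with
    | nil => intro hbv h; rw [hbv] at h; exact absurd h hvD
    | @cons p c q h w ih =>
      intro hbv hp
      by_cases hcD : (c : V) ∈ D
      · exact ih hbv hcD
      · have hadj : G.Adj (p : V) (c : V) := h
        have := hexit _ hp _ c.2 hadj hcD
        exact ⟨p, hp, this ▸ hadj⟩
  obtain ⟨w⟩ := hconn.preconnected ⟨a0, hDA ha0⟩ ⟨v, hv⟩
  exact key _ _ w rfl ha0
end Comps

section Infra

variable {G : SimpleGraph V} {W : Set V}

/-- An induced path, as an indexing function. -/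
structure IPath (G : SimpleGraph V) (W : Set V) (x y : V) (m : ℕ) (f : ℕ → V) : Prop where
  pos : 0 < m
  headx : f 0 = x
  lasty : f (m - 1) = y
  mem : ∀ i, i < m → f i ∈ W
  inj : ∀ i, i < m → ∀ j, j < m → f i = f j → i = j
  adjIff : ∀ i j, i < j → j < m → (G.Adj (f i) (f j) ↔ j = i + 1)

lemma IPath.two_le {x y m f} (h : IPath G W x y m f) (hxy : x ≠ y) : 2 ≤ m := by
  rcases h with ⟨pos, hx, hy, _, inj, _⟩
  by_contra hm
  have hm1 : m = 1 := by omega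
  subst hm1
  have : f 0 = y := by simpa using hy
  exact hxy (hx.symm.trans this)

lemma IPath.three_le {x y m f} (h : IPath G W x y m f) (hxy : x ≠ y)
    (hnadj : ¬ G.Adj x y) : 3 ≤ m := by
  have h2 := h.two_le hxy
  rcases h with ⟨pos, hx, hy, _, inj, adjIff⟩
  by_contra hm
  have hm2 : m = 2 := by omega
  subst hm2
  exact hnadj (hx ▸ hy ▸ ((adjIff 0 1 (by omega) (by omega)).mpr rfl))

/-- From an induced cycle (given by an indexing function) we get a contradiction with
long-hole-freeness. -/
lemma hole_list (hG : LongHoleFree G) (n : ℕ) (h5 : 5 ≤ n) (f : ℕ → V)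
    (hinj : ∀ i, i < n → ∀ j, j < n → f i = f j → i = j)
    (hadj : ∀ i j, i < j → j < n →
      (G.Adj (f i) (f j) ↔ (j = i + 1 ∨ (i = 0 ∧ j = n - 1)))) : False := by
  obtain ⟨m, rfl⟩ : ∃ m, n = m + 2 := ⟨n - 2, by omega⟩
  set n := m + 2 with hn
  have key : ∀ a b : Fin n, (a : ℕ) < (b : ℕ) →
      ((cycleGraph n).Adj a b ↔ ((b : ℕ) = (a : ℕ) + 1 ∨ ((a : ℕ) = 0 ∧ (b : ℕ) = n - 1))) := by
    intro a b hab
    rw [cycleGraph_adj]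
    have ha := a.isLt
    have hb := b.isLt
    have h1 : ((a - b : Fin n) : ℕ) = ((n - (b : ℕ)) + (a : ℕ)) % n := rfl
    have h2 : ((b - a : Fin n) : ℕ) = ((n - (a : ℕ)) + (b : ℕ)) % n := rfl
    have h3 : ((n : ℕ) - (b : ℕ)) + (a : ℕ) < n := by omega
    have h4 : ((n - (a : ℕ)) + (b : ℕ)) = ((b : ℕ) - (a : ℕ)) + n := by omega
    have h5' : ((n - (a : ℕ)) + (b : ℕ)) % n = ((b : ℕ) - (a : ℕ)) % n := by
      rw [h4, Nat.add_mod_right]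
    have h6 : ((b : ℕ) - (a : ℕ)) % n = (b : ℕ) - (a : ℕ) := Nat.mod_eq_of_lt (by omega)
    have hone : ((1 : Fin n) : ℕ) = 1 := rfl
    constructor
    · rintro (h | h)
      · have := congrArg (Fin.val) h
        rw [h1, hone, Nat.mod_eq_of_lt h3] at this
        omega
      · have := congrArg (Fin.val) h
        rw [h2, hone, h5', h6] at this
        omega
    · intro h
      rcases h with h | h
      · right; apply Fin.ext; rw [h2, hone, h5', h6]; omega
      · left; apply Fin.ext; rw [h1, hone, Nat.mod_eq_of_lt h3]; omega
  have hinj' : Function.Injective (fun a : Fin n => f (a : ℕ)) := by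
    intro a b hab
    exact Fin.ext (hinj _ a.isLt _ b.isLt hab)
  refine (hG n h5).false ⟨⟨fun a => f (a : ℕ), hinj'⟩, ?_⟩
  · intro a b
    simp only [Function.Embedding.coeFn_mk]
    rcases lt_trichotomy (a : ℕ) (b : ℕ) with h | h | h
    · rw [key a b h, hadj _ _ h b.isLt]
    · have : a = b := Fin.ext h
      subst this
      constructor
      · intro hx; exact absurd hx (G.irrefl)
      · intro hx; exact absurd hx ((cycleGraph n).irrefl)
    · rw [G.adj_comm, (cycleGraph n).adj_comm, key b a h, hadj _ _ h a.isLt]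

/-- Shortest-chain extraction: from any walk-chain we get an induced path. -/
lemma exists_indPath (G : SimpleGraph V) (W : Set V) :
    ∀ (m : ℕ) (f : ℕ → V), 0 < m → (∀ i, i + 1 < m → G.Adj (f i) (f (i + 1))) →
      (∀ i, i < m → f i ∈ W) →
      ∃ m' f', IPath G W (f 0) (f (m - 1)) m' f' := by
  intro m
  induction m using Nat.strong_induction_on with
  | _ m IH =>
    intro f hm hch hmem
    by_cases hbad : ∃ i j, i < j ∧ j < m ∧ (f i = f j ∨ (i + 1 < j ∧ G.Adj (f i) (f j)))
    · obtain ⟨i, j, hij, hjm, hbad⟩ := hbad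
      -- splice out the segment (i, j]; in the eq case shift by d = j - i,
      -- in the adj case shift by d = j - i - 1.
      obtain ⟨d, hd1, hdij, hbound, hend⟩ :
          ∃ d, 0 < d ∧ i + d ≤ j ∧
            (i + 1 + d < m → G.Adj (f i) (f (i + 1 + d))) ∧
            (m - d - 1 ≤ i → f i = f (m - 1)) := by
        rcases hbad with heq | ⟨hgap, hadj⟩
        · refine ⟨j - i, by omega, by omega, ?_, ?_⟩
          · intro h
            have : i + 1 + (j - i) = j + 1 := by omega
            rw [this]
            exact heq ▸ hch j (by omega)
          · intro h
            have : j = m - 1 := by omega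
            rw [← this]; exact heq
        · refine ⟨j - i - 1, by omega, by omega, ?_, ?_⟩
          · intro h
            have : i + 1 + (j - i - 1) = j := by omega
            rw [this]; exact hadj
          · intro h; omega
      set g : ℕ → V := fun n => if n ≤ i then f n else f (n + d) with hg
      have hgm : 0 < m - d := by omega
      have hch' : ∀ n, n + 1 < m - d → G.Adj (g n) (g (n + 1)) := by
        intro n hn
        by_cases h1 : n + 1 ≤ i
        · simp only [hg, if_pos h1, if_pos (by omega : n ≤ i)]
          exact hch n (by omega)
        · by_cases h2 : n ≤ i
          · have hni : n = i := by omega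
            simp only [hg, if_pos h2, if_neg h1]
            rw [hni]
            exact hbound (by omega)
          · simp only [hg, if_neg h1, if_neg h2]
            have he : n + 1 + d = n + d + 1 := by omega
            rw [he]
            exact hch (n + d) (by omega)
      have hmem' : ∀ n, n < m - d → g n ∈ W := by
        intro n hn
        by_cases h1 : n ≤ i
        · simp only [hg, if_pos h1]; exact hmem n (by omega)
        · simp only [hg, if_neg h1]; exact hmem (n + d) (by omega)
      obtain ⟨m', f', hf'⟩ := IH (m - d) (by omega) g hgm hch' hmem'
      refine ⟨m', f', ?_⟩
      have h0 : g 0 = f 0 := by simp [hg]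
      have hl : g (m - d - 1) = f (m - 1) := by
        by_cases h1 : m - d - 1 ≤ i
        · simp only [hg, if_pos h1]
          have hie : m - d - 1 = i := by omega
          rw [hie]
          exact hend h1
        · simp only [hg, if_neg h1]
          congr 1
          omega
      rwa [h0, hl] at hf'
    · push_neg at hbad
      refine ⟨m, f, hm, rfl, rfl, hmem, ?_, ?_⟩
      · intro a ha b hb hab
        rcases lt_trichotomy a b with h | h | h
        · exact absurd hab (hbad a b h hb).1
        · exact h
        · exact absurd hab.symm (hbad b a h ha).1
      · intro a b h hb
        constructor
        · intro hadj
          by_contra hne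
          exact (hbad a b h hb).2 (by omega) hadj
        · rintro rfl
          exact hch a hb

end Infra

section Glue
variable {G : SimpleGraph V}

/-- Gluing two induced paths with the same endpoints into a long hole. -/
lemma glue_paths (hG : LongHoleFree G) {Wp Wq : Set V} {x y : V} {P Q : ℕ} {p q : ℕ → V}
    (hp : IPath G Wp x y P p) (hq : IPath G Wq x y Q q)
    (hP : 3 ≤ P) (hQ : 3 ≤ Q) (h7 : 7 ≤ P + Q)
    (hdisj : ∀ i j, 0 < i → i < P - 1 → 0 < j → j < Q - 1 → p i ≠ q j)
    (hcross : ∀ i j, 0 < i → i < P - 1 → 0 < j → j < Q - 1 → ¬ G.Adj (p i) (q j)) : False := by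
  set n := P + Q - 2 with hn
  set f : ℕ → V := fun i => if i < P then p i else q (P + Q - 2 - i) with hf
  -- basic facts
  have hpx := hp.headx
  have hpy := hp.lasty
  have hqx := hq.headx
  have hqy := hq.lasty
  -- p-values vs q-values
  have hpq : ∀ i r, i < P → 0 < r → r < Q - 1 → p i ≠ q r := by
    intro i r hi hr1 hr2 heq
    by_cases hi0 : i = 0
    · subst hi0
      rw [hpx, ← hqx] at heq
      exact absurd (hq.inj 0 (by omega) r (by omega) heq) (by omega)
    by_cases hiP : i = P - 1
    · subst hiP
      rw [hpy, ← hqy] at heq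
      exact absurd (hq.inj (Q-1) (by omega) r (by omega) heq) (by omega)
    · exact hdisj i r (by omega) (by omega) hr1 hr2 heq
  have hinj : ∀ i, i < n → ∀ j, j < n → f i = f j → i = j := by
    intro i hi j hj heq
    simp only [hf] at heq
    by_cases h1 : i < P <;> by_cases h2 : j < P
    · rw [if_pos h1, if_pos h2] at heq
      exact hp.inj i h1 j h2 heq
    · rw [if_pos h1, if_neg h2] at heq
      exact absurd heq (hpq i _ h1 (by omega) (by omega))
    · rw [if_neg h1, if_pos h2] at heq
      exact absurd heq.symm (hpq j _ h2 (by omega) (by omega))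
    · rw [if_neg h1, if_neg h2] at heq
      have := hq.inj _ (by omega) _ (by omega) heq
      omega
  refine hole_list hG n (by omega) f hinj ?_
  intro i j hij hjn
  simp only [hf]
  by_cases h2 : j < P
  · -- both in p
    rw [if_pos (by omega : i < P), if_pos h2, hp.adjIff i j hij h2]
    omega
  · by_cases h1 : i < P
    · -- i in p, j in tail
      rw [if_pos h1, if_neg h2]
      have hr1 : 0 < P + Q - 2 - j := by omega
      have hr2 : P + Q - 2 - j ≤ Q - 2 := by omega
      by_cases hi0 : i = 0
      · subst hi0
        rw [hpx, ← hqx, hq.adjIff 0 (P + Q - 2 - j) hr1 (by omega)]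
        omega
      · by_cases hiP : i = P - 1
        · subst hiP
          rw [hpy, ← hqy, G.adj_comm,
            hq.adjIff (P + Q - 2 - j) (Q - 1) (by omega) (by omega)]
          omega
        · refine iff_of_false ?_ (by omega)
          exact hcross i (P + Q - 2 - j) (by omega) (by omega) hr1 (by omega)
    · -- both in tail
      rw [if_neg h1, if_neg h2, G.adj_comm,
        hq.adjIff (P + Q - 2 - j) (P + Q - 2 - i) (by omega) (by omega)]
      omega

end Glue

section Small
variable {G : SimpleGraph V}

lemma IPath.of4 {a b c d : V}
    (hab : G.Adj a b) (hbc : G.Adj b c) (hcd : G.Adj c d)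
    (nac : ¬ G.Adj a c) (nad : ¬ G.Adj a d) (nbd : ¬ G.Adj b d)
    (neac : a ≠ c) (nead : a ≠ d) (nebd : b ≠ d) :
    IPath G Set.univ a d 4 (fun n => if n = 0 then a else if n = 1 then b
      else if n = 2 then c else d) := by
  have h1 := hab.ne
  have h2 := hbc.ne
  have h3 := hcd.ne
  refine ⟨by omega, rfl, rfl, fun i _ => Set.mem_univ _, ?_, ?_⟩
  · intro i hi j hj heq
    interval_cases i <;> interval_cases j <;> simp_all
  · intro i j hij hj
    have hi : i < 4 := by omega
    interval_cases i <;> interval_cases j <;>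
      simp_all [G.adj_comm]
  
lemma IPath.of5 {a b c d e : V}
    (hab : G.Adj a b) (hbc : G.Adj b c) (hcd : G.Adj c d) (hde : G.Adj d e)
    (nac : ¬ G.Adj a c) (nad : ¬ G.Adj a d) (nae : ¬ G.Adj a e)
    (nbd : ¬ G.Adj b d) (nbe : ¬ G.Adj b e) (nce : ¬ G.Adj c e)
    (neac : a ≠ c) (nead : a ≠ d) (neae : a ≠ e) (nebd : b ≠ d) (nebe : b ≠ e)
    (nece : c ≠ e) :
    IPath G Set.univ a e 5 (fun n => if n = 0 then a else if n = 1 then b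
      else if n = 2 then c else if n = 3 then d else e) := by
  have h1 := hab.ne
  have h2 := hbc.ne
  have h3 := hcd.ne
  have h4 := hde.ne
  refine ⟨by omega, rfl, rfl, fun i _ => Set.mem_univ _, ?_, ?_⟩
  · intro i hi j hj heq
    interval_cases i <;> interval_cases j <;> simp_all
  · intro i j hij hj
    have hi : i < 5 := by omega
    interval_cases i <;> interval_cases j <;>
      simp_all [G.adj_comm]

/-- A 5-hole where also the two endpoints are adjacent. -/
lemma hole5 (hG : LongHoleFree G) {a b c d e : V}
    (hab : G.Adj a b) (hbc : G.Adj b c) (hcd : G.Adj c d) (hde : G.Adj d e)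
    (hea : G.Adj e a)
    (nac : ¬ G.Adj a c) (nad : ¬ G.Adj a d)
    (nbd : ¬ G.Adj b d) (nbe : ¬ G.Adj b e) (nce : ¬ G.Adj c e)
    (neac : a ≠ c) (nead : a ≠ d) (nebd : b ≠ d) (nebe : b ≠ e)
    (nece : c ≠ e) : False := by
  have h1 := hab.ne
  have h2 := hbc.ne
  have h3 := hcd.ne
  have h4 := hde.ne
  have h5 := hea.ne
  refine hole_list hG 5 (by omega)
    (fun n => if n = 0 then a else if n = 1 then b
      else if n = 2 then c else if n = 3 then d else e) ?_ ?_
  · intro i hi j hj heq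
    interval_cases i <;> interval_cases j <;> simp_all
  · intro i j hij hj
    have hi : i < 5 := by omega
    interval_cases i <;> interval_cases j <;>
      simp_all [G.adj_comm]

end Small

section MainHelpers
variable {G : SimpleGraph V}

lemma ChainFn.toIPath {W : Set V} {x y : V} {m : ℕ} {f : ℕ → V} (h : ChainFn G W x y m f) :
    ∃ m' f', IPath G W x y m' f' := by
  obtain ⟨m', f', h'⟩ := exists_indPath G W m f h.pos h.chain h.mem
  rw [h.headx, h.lasty] at h'
  exact ⟨m', f', h'⟩

lemma IPath.interior_mem {W : Set V} {x y : V} {m : ℕ} {f : ℕ → V}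
    (h : IPath G W x y m f) {i : ℕ} (h1 : 0 < i) (h2 : i < m - 1) :
    f i ∈ W ∧ f i ≠ x ∧ f i ≠ y := by
  refine ⟨h.mem i (by omega), ?_, ?_⟩
  · intro he
    rw [← h.headx] at he
    have := h.inj i (by omega) 0 (by omega) he
    omega
  · intro he
    rw [← h.lasty] at he
    have := h.inj i (by omega) (m - 1) (by omega) he
    omega

/-- Extraction of a minimal dominating subset containing a designated vertex. -/
lemma exists_minimal_dominating [Fintype V] (G : SimpleGraph V) (S : Set V)
    (F : Set V) (v : V) (hv : v ∈ F) (hF : S ⊆ nbhdSet G F) :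
    ∃ Z, Z ⊆ F ∧ v ∈ Z ∧ S ⊆ nbhdSet G Z ∧
      ∀ z ∈ Z, z ≠ v → ¬ S ⊆ nbhdSet G (Z \ {z}) := by
  classical
  have key : ∀ (n : ℕ) (F' : Set V) (v : V), F'.ncard = n → v ∈ F' → S ⊆ nbhdSet G F' →
      ∃ Z, Z ⊆ F' ∧ v ∈ Z ∧ S ⊆ nbhdSet G Z ∧
        ∀ z ∈ Z, z ≠ v → ¬ S ⊆ nbhdSet G (Z \ {z}) := by
    intro n
    induction n using Nat.strong_induction_on with
    | _ n IH =>
    intro F' v hn hv hF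
    by_cases hmin : ∀ z ∈ F', z ≠ v → ¬ S ⊆ nbhdSet G (F' \ {z})
    · exact ⟨F', le_refl _, hv, hF, hmin⟩
    · push_neg at hmin
      obtain ⟨z, hz, hzv, hzS⟩ := hmin
      have hlt : (F' \ {z}).ncard < n := by
        rw [← hn]
        exact Set.ncard_diff_singleton_lt_of_mem hz (Set.toFinite F')
      obtain ⟨Z, hZ1, hZ2, hZ3, hZ4⟩ :=
        IH _ hlt (F' \ {z}) v rfl ⟨hv, by simpa using (Ne.symm hzv)⟩ hzS
      exact ⟨Z, hZ1.trans Set.diff_subset, hZ2, hZ3, hZ4⟩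
  exact key F.ncard F v rfl hv hF

end MainHelpers

theorem stmt6 [Fintype V] (k : ℕ) (hk : 2 ≤ k) (G : SimpleGraph V)
    (hG : LongHoleFree G) (hprism : IsEmpty (prism k ↪g G))
    (S A B : Set V) (hS : IsMinSep G S)
    (hA : IsFullComp G S A) (hB : IsFullComp G S B) (hAB : A ≠ B)
    (v : V) (hv : v ∈ A)
    (hcomps : ∀ A', IsCompOf G ((A \ {v})ᶜ) A' → (S \ nbhdSet G A').Nonempty) :
    ∃ Z : Set V, Z ⊆ A ∩ insert v (G.neighborSet v) ∧ v ∈ Z ∧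
      Z.ncard ≤ k ∧ S ⊆ nbhdSet G Z := by
  classical
  obtain ⟨hAc, hAn⟩ := hA
  obtain ⟨hBc, hBn⟩ := hB
  have hAconn := hAc.2.2.1
  have hBconn := hBc.2.2.1
  have hSA : ∀ s ∈ S, s ∉ A ∧ ∃ a ∈ A, G.Adj s a := by
    intro s hs; rw [← hAn] at hs; exact hs
  have hSB : ∀ s ∈ S, s ∉ B ∧ ∃ b ∈ B, G.Adj s b := by
    intro s hs; rw [← hBn] at hs; exact hs
  have hABdisj : ∀ a ∈ A, ∀ b ∈ B, a ≠ b ∧ ¬ G.Adj a b :=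
    fun a ha b hb => comp_nonadj hAc hBc hAB ha hb
  have hvnotS : v ∉ S := hAc.2.1 hv
  -- induced paths through B between two vertices of S
  have BP : ∀ s t : V, s ∈ S → t ∈ S →
      ∃ m f, IPath G (insert s (insert t B)) s t m f := by
    intro s t hs ht
    obtain ⟨hsB, bs, hbs, hsbs⟩ := hSB s hs
    obtain ⟨htB, bt, hbt, htbt⟩ := hSB t ht
    obtain ⟨mB, fB, hfB⟩ := exists_chainFn_of_connected hBconn hbs hbt
    have c1 := (((ChainFn.single (G := G) (W := insert s (insert t B)) (x := s)
        (by simp)).join (hfB.mono (by intro x hx; simp [hx])) hsbs).snoc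
        (by simp) htbt.symm)
    exact c1.toIPath
  -- STEP 1 : every s ∈ S non-adjacent to v has a neighbor in N(v) ∩ A
  have L1 : ∀ s ∈ S, ¬ G.Adj s v → ∃ z, z ∈ A ∧ G.Adj v z ∧ G.Adj z s := by
    intro s hs hsv
    by_contra hno
    push_neg at hno
    obtain ⟨hsA, a0, ha0A, hsa0⟩ := hSA s hs
    have ha0v : a0 ≠ v := fun h => hsv (h ▸ hsa0)
    have ha0X : a0 ∉ ((A \ {v})ᶜ : Set V) := by simp [ha0A, ha0v]
    obtain ⟨Ai, hAi, ha0i⟩ := exists_comp (G := G) ((A \ {v})ᶜ) ha0X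
    have hAiA : Ai ⊆ A \ {v} := by
      have := hAi.2.1; rwa [compl_compl] at this
    have hvAi : v ∉ Ai := fun h => (hAiA h).2 rfl
    have hexit : ∀ u ∈ Ai, ∀ w ∈ A, G.Adj u w → w ∉ Ai → w = v := by
      intro u hu w hw hadj hwAi
      by_contra hwv
      exact hwAi (hAi.2.2.2 u hu w
        (by simp only [Set.mem_compl_iff, not_not]; exact ⟨hw, hwv⟩) hadj)
    obtain ⟨u1, hu1, hu1v⟩ := comp_attach (D := Ai) hAconn
      (fun x hx => (hAiA hx).1) hv hvAi hAi.1 hexit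
    have hsAi : s ∉ Ai := fun h => hsA (hAiA h).1
    obtain ⟨mA, fA, hfA⟩ := exists_chainFn_of_connected hAi.2.2.1 hu1 ha0i
    have cp := (((ChainFn.single (G := G) (W := insert v (insert s Ai)) (x := v)
        (by simp)).join (hfA.mono (by intro x hx; simp [hx])) hu1v.symm).snoc
        (by simp) hsa0.symm)
    obtain ⟨P, p, hp⟩ := cp.toIPath
    have hvs : v ≠ s := fun h => hsA (h ▸ hv)
    have hP3 : 3 ≤ P := hp.three_le hvs (fun h => hsv h.symm)
    have hpint : ∀ i, 0 < i → i < P - 1 → p i ∈ Ai := by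
      intro i h1 h2
      obtain ⟨hm, hne1, hne2⟩ := hp.interior_mem h1 h2
      simp only [Set.mem_insert_iff] at hm
      rcases hm with h | h | h
      · exact absurd h hne1
      · exact absurd h hne2
      · exact h
    have hP4 : 4 ≤ P := by
      by_contra hP
      have hPe : P = 3 := by omega
      have h01 : G.Adj (p 0) (p 1) := (hp.adjIff 0 1 (by omega) (by omega)).mpr rfl
      have h12 : G.Adj (p 1) (p 2) := (hp.adjIff 1 2 (by omega) (by omega)).mpr rfl
      have hp1 : p 1 ∈ Ai := hpint 1 (by omega) (by omega)
      have hvp : G.Adj v (p 1) := hp.headx ▸ h01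
      have hlast : p 2 = s := by
        have := hp.lasty; rw [hPe] at this; exact this
      exact hno (p 1) ((hAiA hp1).1) hvp (hlast ▸ h12)
    obtain ⟨t, htS, htn⟩ := hcomps Ai hAi
    have htA : t ∉ A := (hSA t htS).1
    have htAi : ∀ d ∈ Ai, ¬ G.Adj t d := by
      intro d hd hadj
      exact htn ⟨fun h => htA (hAiA h).1, d, hd, hadj⟩
    have hts : t ≠ s := by rintro rfl; exact htAi a0 ha0i hsa0
    obtain ⟨hsB', bs, hbs, hsbs⟩ := hSB s hs
    obtain ⟨htB', bt, hbt, htbt⟩ := hSB t htS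
    obtain ⟨mB, fB, hfB⟩ := exists_chainFn_of_connected hBconn hbt hbs
    by_cases htadj : G.Adj t v
    · -- q : v → t → (B) → s
      have cq := ((((ChainFn.single (G := G)
          (W := insert v (insert t (insert s B))) (x := v) (by simp)).snoc
          (by simp) htadj.symm).join (hfB.mono (by intro x hx; simp [hx])) htbt).snoc
          (by simp) hsbs.symm)
      obtain ⟨Q, q, hq⟩ := cq.toIPath
      have hQ3 : 3 ≤ Q := hq.three_le hvs (fun h => hsv h.symm)
      have hqint : ∀ j, 0 < j → j < Q - 1 → q j = t ∨ q j ∈ B := by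
        intro j h1 h2
        obtain ⟨hm, hne1, hne2⟩ := hq.interior_mem h1 h2
        simp only [Set.mem_insert_iff] at hm
        rcases hm with h | h | h | h
        · exact absurd h hne1
        · exact Or.inl h
        · exact absurd h hne2
        · exact Or.inr h
      refine glue_paths hG hp hq (by omega) hQ3 (by omega) ?_ ?_
      · intro i j hi1 hi2 hj1 hj2
        have hpi := hpint i hi1 hi2
        rcases hqint j hj1 hj2 with h | h
        · intro he; apply htA; rw [← h, ← he]; exact (hAiA hpi).1
        · exact fun he => (hABdisj _ (hAiA hpi).1 _ h).1 he
      · intro i j hi1 hi2 hj1 hj2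
        have hpi := hpint i hi1 hi2
        rcases hqint j hj1 hj2 with h | h
        · intro hadj; rw [h] at hadj; exact htAi _ hpi hadj.symm
        · exact fun hadj => (hABdisj _ (hAiA hpi).1 _ h).2 hadj
    · -- t not adjacent to v : route via a second component Aj
      obtain ⟨a0', ha0'A, hta0'⟩ := (hSA t htS).2
      have ha0'v : a0' ≠ v := fun h => htadj (h ▸ hta0')
      have ha0'X : a0' ∉ ((A \ {v})ᶜ : Set V) := by simp [ha0'A, ha0'v]
      obtain ⟨Aj, hAj, ha0'j⟩ := exists_comp (G := G) ((A \ {v})ᶜ) ha0'X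
      have hAjA : Aj ⊆ A \ {v} := by
        have := hAj.2.1; rwa [compl_compl] at this
      have hij : Ai ≠ Aj := fun h => htAi a0' (h ▸ ha0'j) hta0'
      have hvAj : v ∉ Aj := fun h => (hAjA h).2 rfl
      have hexitj : ∀ u ∈ Aj, ∀ w ∈ A, G.Adj u w → w ∉ Aj → w = v := by
        intro u hu w hw hadj hwAj
        by_contra hwv
        exact hwAj (hAj.2.2.2 u hu w
          (by simp only [Set.mem_compl_iff, not_not]; exact ⟨hw, hwv⟩) hadj)
      obtain ⟨u2, hu2, hu2v⟩ := comp_attach (D := Aj) hAconn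
        (fun x hx => (hAjA hx).1) hv hvAj hAj.1 hexitj
      obtain ⟨mj, fj, hfj⟩ := exists_chainFn_of_connected hAj.2.2.1 hu2 ha0'j
      have cq := (((((ChainFn.single (G := G)
          (W := insert v (insert t (insert s (Aj ∪ B)))) (x := v) (by simp)).join
          (hfj.mono (by intro x hx; simp [hx])) hu2v.symm).snoc
          (by simp) hta0'.symm).join (hfB.mono (by intro x hx; simp [hx])) htbt).snoc
          (by simp) hsbs.symm)
      obtain ⟨Q, q, hq⟩ := cq.toIPath
      have hQ3 : 3 ≤ Q := hq.three_le hvs (fun h => hsv h.symm)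
      have hqint : ∀ j, 0 < j → j < Q - 1 → q j = t ∨ q j ∈ Aj ∨ q j ∈ B := by
        intro j h1 h2
        obtain ⟨hm, hne1, hne2⟩ := hq.interior_mem h1 h2
        simp only [Set.mem_insert_iff, Set.mem_union] at hm
        rcases hm with h | h | h | h | h
        · exact absurd h hne1
        · exact Or.inl h
        · exact absurd h hne2
        · exact Or.inr (Or.inl h)
        · exact Or.inr (Or.inr h)
      refine glue_paths hG hp hq (by omega) hQ3 (by omega) ?_ ?_
      · intro i j hi1 hi2 hj1 hj2
        have hpi := hpint i hi1 hi2
        rcases hqint j hj1 hj2 with h | h | h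
        · intro he; apply htA; rw [← h, ← he]; exact (hAiA hpi).1
        · exact fun he => (comp_nonadj hAi hAj hij hpi h).1 he
        · exact fun he => (hABdisj _ (hAiA hpi).1 _ h).1 he
      · intro i j hi1 hi2 hj1 hj2
        have hpi := hpint i hi1 hi2
        rcases hqint j hj1 hj2 with h | h | h
        · intro hadj; rw [h] at hadj; exact htAi _ hpi hadj.symm
        · exact fun hadj => (comp_nonadj hAi hAj hij hpi h).2 hadj
        · exact fun hadj => (hABdisj _ (hAiA hpi).1 _ h).2 hadj
  -- STEP 2 : pairwise adjacency of private pairs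
  have L2 : ∀ z z' s s' : V, z ∈ A → z' ∈ A → G.Adj v z → G.Adj v z' → z ≠ z' →
      s ∈ S → s' ∈ S → G.Adj s z → ¬ G.Adj s z' → ¬ G.Adj s v →
      G.Adj s' z' → ¬ G.Adj s' z → ¬ G.Adj s' v →
      G.Adj z z' ∧ G.Adj s s' := by
    intro z z' s s' hzA hz'A hvz hvz' hzz' hsS hs'S hsz hsz' hsv hs'z' hs'z hs'v
    have hss'ne : s ≠ s' := fun h => hs'z (h ▸ hsz)
    have hsA := (hSA s hsS).1
    have hs'A := (hSA s' hs'S).1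
    have hsvne : s ≠ v := fun h => hsA (h ▸ hv)
    have hs'vne : v ≠ s' := fun h => hs'A (h ▸ hv)
    have hsz'ne : s ≠ z' := fun h => hsA (h ▸ hz'A)
    have hzs'ne : z ≠ s' := fun h => hs'A (h ▸ hzA)
    have hadjzz' : G.Adj z z' := by
      by_contra hno
      by_cases hss : G.Adj s s'
      · exact hole5 hG hsz hvz.symm hvz' hs'z'.symm hss.symm
          hsv hsz' hno (fun h => hs'z h.symm) (fun h => hs'v h.symm)
          hsvne hsz'ne hzz' hzs'ne hs'vne
      · obtain ⟨Q, q, hq⟩ := BP s s' hsS hs'S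
        have hQ3 : 3 ≤ Q := hq.three_le hss'ne hss
        have hp5 := IPath.of5 (G := G) hsz hvz.symm hvz' hs'z'.symm
          hsv hsz' hss hno (fun h => hs'z h.symm) (fun h => hs'v h.symm)
          hsvne hsz'ne hss'ne hzz' hzs'ne hs'vne
        have hqB : ∀ j, 0 < j → j < Q - 1 → q j ∈ B := by
          intro j h1 h2
          obtain ⟨hm, hne1, hne2⟩ := hq.interior_mem h1 h2
          simp only [Set.mem_insert_iff] at hm
          rcases hm with h | h | h
          · exact absurd h hne1
          · exact absurd h hne2
          · exact h
        have hpA : ∀ i, 0 < i → i < 4 →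
            (fun n => if n = 0 then s else if n = 1 then z
              else if n = 2 then v else if n = 3 then z' else s') i ∈ A := by
          intro i h1 h2
          interval_cases i
          · simpa using hzA
          · simpa using hv
          · simpa using hz'A
        refine glue_paths hG hp5 hq (by omega) hQ3 (by omega) ?_ ?_
        · intro i j hi1 hi2 hj1 hj2
          exact (hABdisj _ (hpA i hi1 hi2) _ (hqB j hj1 hj2)).1
        · intro i j hi1 hi2 hj1 hj2
          exact (hABdisj _ (hpA i hi1 hi2) _ (hqB j hj1 hj2)).2
    have hadjss' : G.Adj s s' := by
      by_contra hss
      obtain ⟨Q, q, hq⟩ := BP s s' hsS hs'S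
      have hQ3 : 3 ≤ Q := hq.three_le hss'ne hss
      have hp4 := IPath.of4 (G := G) hsz hadjzz' hs'z'.symm
        hsz' hss (fun h => hs'z h.symm) hsz'ne hss'ne hzs'ne
      have hqB : ∀ j, 0 < j → j < Q - 1 → q j ∈ B := by
        intro j h1 h2
        obtain ⟨hm, hne1, hne2⟩ := hq.interior_mem h1 h2
        simp only [Set.mem_insert_iff] at hm
        rcases hm with h | h | h
        · exact absurd h hne1
        · exact absurd h hne2
        · exact h
      have hpA : ∀ i, 0 < i → i < 3 →
          (fun n => if n = 0 then s else if n = 1 then z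
            else if n = 2 then z' else s') i ∈ A := by
        intro i h1 h2
        interval_cases i
        · simpa using hzA
        · simpa using hz'A
      refine glue_paths hG hp4 hq (by omega) hQ3 (by omega) ?_ ?_
      · intro i j hi1 hi2 hj1 hj2
        exact (hABdisj _ (hpA i hi1 hi2) _ (hqB j hj1 hj2)).1
      · intro i j hi1 hi2 hj1 hj2
        exact (hABdisj _ (hpA i hi1 hi2) _ (hqB j hj1 hj2)).2
    exact ⟨hadjzz', hadjss'⟩
  -- STEP 3 : find minimal dominating set inside A ∩ N[v]
  have hvF : v ∈ A ∩ insert v (G.neighborSet v) := ⟨hv, Set.mem_insert _ _⟩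
  have hSF : S ⊆ nbhdSet G (A ∩ insert v (G.neighborSet v)) := by
    intro s hs
    have hsA := (hSA s hs).1
    have hsF : s ∉ A ∩ insert v (G.neighborSet v) := fun h => hsA h.1
    by_cases hsv : G.Adj s v
    · exact ⟨hsF, v, hvF, hsv⟩
    · obtain ⟨z, hzA, hvz, hzs⟩ := L1 s hs hsv
      exact ⟨hsF, z, ⟨hzA, Set.mem_insert_of_mem _ hvz⟩, hzs.symm⟩
  obtain ⟨Z, hZF, hvZ, hZS, hZmin⟩ :=
    exists_minimal_dominating G S (A ∩ insert v (G.neighborSet v)) v hvF hSF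
  by_cases hZk : Z.ncard ≤ k
  · exact ⟨Z, hZF, hvZ, hZk, hZS⟩
  exfalso
  have hZA : Z ⊆ A := fun z hz => (hZF hz).1
  have hZadj : ∀ z ∈ Z, z ≠ v → G.Adj v z := by
    intro z hz hzv
    rcases (hZF hz).2 with h | h
    · exact absurd h hzv
    · exact h
  have hpriv : ∀ z ∈ Z, z ≠ v → ∃ s, s ∈ S ∧ G.Adj s z ∧
      ∀ z' ∈ Z, z' ≠ z → ¬ G.Adj s z' := by
    intro z hz hzv
    have hnsub := hZmin z hz hzv
    rw [Set.not_subset] at hnsub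
    obtain ⟨s, hsS, hsn⟩ := hnsub
    have hsZ : s ∉ Z := fun h => (hSA s hsS).1 (hZA h)
    obtain ⟨-, d, hdZ, hsd⟩ := hZS hsS
    have hnot : ∀ z' ∈ Z, z' ≠ z → ¬ G.Adj s z' := by
      intro z' hz' hz'z hadj
      exact hsn ⟨fun hmem => hsZ hmem.1, z', ⟨hz', hz'z⟩, hadj⟩
    have hdz : d = z := by
      by_contra hdz
      exact hnot d hdZ hdz hsd
    exact ⟨s, hsS, hdz ▸ hsd, hnot⟩
  have hZv : k ≤ (Z \ {v}).ncard := by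
    have h1 : (Z \ {v}).ncard = Z.ncard - 1 :=
      Set.ncard_diff_singleton_of_mem hvZ
    omega
  obtain ⟨T, hTsub, hTcard⟩ := Set.exists_subset_card_eq hZv
  haveI : Fintype T := (Set.toFinite T).fintype
  have hTc : Fintype.card T = k := by
    rw [← Set.toFinset_card, ← Set.ncard_eq_toFinset_card' T]
    exact hTcard
  set eqv := Fintype.equivFinOfCardEq hTc with heqv
  set zf : Fin k → V := fun i => ((eqv.symm i : T) : V) with hzf
  have hzfT : ∀ i, zf i ∈ T := fun i => (eqv.symm i).2
  have hzfZ : ∀ i, zf i ∈ Z := fun i => (hTsub (hzfT i)).1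
  have hzfv : ∀ i, zf i ≠ v := by
    intro i
    have := (hTsub (hzfT i)).2
    simpa using this
  have hzfinj : Function.Injective zf := by
    intro i j h
    exact eqv.symm.injective (Subtype.ext h)
  choose sf hsfS hsfadj hsfpriv using fun i => hpriv (zf i) (hzfZ i) (hzfv i)
  have hsfv : ∀ i, ¬ G.Adj (sf i) v := fun i =>
    hsfpriv i v hvZ (fun h => hzfv i h.symm)
  have hpair : ∀ i j : Fin k, i ≠ j → G.Adj (zf i) (zf j) ∧ G.Adj (sf i) (sf j) := by
    intro i j hij
    have hne : zf i ≠ zf j := fun h => hij (hzfinj h)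
    exact L2 (zf i) (zf j) (sf i) (sf j) (hZA (hzfZ i)) (hZA (hzfZ j))
      (hZadj _ (hzfZ i) (hzfv i)) (hZadj _ (hzfZ j) (hzfv j)) hne
      (hsfS i) (hsfS j) (hsfadj i) (hsfpriv i _ (hzfZ j) (fun h => hne h.symm))
      (hsfv i) (hsfadj j) (hsfpriv j _ (hzfZ i) hne) (hsfv j)
  have hsfne : ∀ i j : Fin k, i ≠ j → sf i ≠ sf j := by
    intro i j hij h
    have := hsfpriv j (zf i) (hzfZ i) (fun he => hij (hzfinj he))
    rw [← h] at this
    exact this (hsfadj i)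
  have hsfzf : ∀ i j : Fin k, sf i ≠ zf j := by
    intro i j h
    exact (hSA (sf i) (hsfS i)).1 (h ▸ hZA (hzfZ j))
  have hcrossadj : ∀ i j : Fin k, i ≠ j → ¬ G.Adj (sf i) (zf j) := by
    intro i j hij
    exact hsfpriv i _ (hzfZ j) (fun h => hij (hzfinj h).symm)
  refine (hprism.false ⟨⟨Sum.elim sf zf, ?_⟩, ?_⟩)
  · rintro (i | i) (j | j) h
    · simp only [Sum.elim_inl] at h
      by_contra hij
      exact hsfne i j (fun he => hij (by rw [he])) h
    · exact absurd h (hsfzf i j)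
    · exact absurd h.symm (hsfzf j i)
    · simp only [Sum.elim_inr] at h
      rw [hzfinj h]
  · rintro (i | i) (j | j)
    · show G.Adj (sf i) (sf j) ↔ i ≠ j
      constructor
      · intro h hij
        subst hij
        exact G.irrefl h
      · intro hij
        exact (hpair i j hij).2
    · show G.Adj (sf i) (zf j) ↔ i = j
      constructor
      · intro h
        by_contra hij
        exact hcrossadj i j hij h
      · rintro rfl
        exact hsfadj i
    · show G.Adj (zf i) (sf j) ↔ i = j
      constructor
      · intro h
        by_contra hij
        exact hcrossadj j i (fun he => hij he.symm) h.symm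
      · rintro rfl
        exact (hsfadj i).symm
    · show G.Adj (zf i) (zf j) ↔ i ≠ j
      constructor
      · intro h hij
        subst hij
        exact G.irrefl h
      · intro hij
        exact (hpair i j hij).1
end

section
/- Let G be a long-hole-free graph, let S be a minimal separator in G, and let A be a full component for S (N(A) = S). Then for every independent set M ⊆ S there exists a vertex a ∈ A with M ⊆ N(a). -/
open SimpleGraph

variable {V : Type*}

variable {G : SimpleGraph V}

/-- A walk from `u` to `v` (as a function) whose interior lies in `D`. -/
def FunPath (G : SimpleGraph V) (D : Set V) (u v : V) (ℓ : ℕ) (p : ℕ → V) : Prop :=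
  p 0 = u ∧ p ℓ = v ∧ (∀ i, i < ℓ → G.Adj (p i) (p (i+1))) ∧ (∀ i, 0 < i → i < ℓ → p i ∈ D)

lemma walk_to_fun {D : Set V} {a b : D} (w : (G.induce D).Walk a b) :
    ∃ (ℓ : ℕ) (p : ℕ → V), p 0 = a ∧ p ℓ = b ∧ (∀ i, i < ℓ → G.Adj (p i) (p (i+1))) ∧
      (∀ i, i ≤ ℓ → p i ∈ D) := by
  induction w with
  | @nil u => exact ⟨0, fun _ => u, rfl, rfl, by omega, fun i _ => u.2⟩
  | @cons u v c h w ih =>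
    obtain ⟨ℓ, p, h0, hl, hadj, hmem⟩ := ih
    refine ⟨ℓ+1, fun i => if i = 0 then u else p (i-1), by simp, by simp [hl], ?_, ?_⟩
    · intro i hi
      rcases Nat.eq_zero_or_pos i with h'|h'
      · subst h'; simpa [h0] using h
      · simp only [if_neg (by omega : ¬ i = 0), if_neg (by omega : ¬ i + 1 = 0)]
        have := hadj (i-1) (by omega)
        have e : i + 1 - 1 = (i-1) + 1 := by omega
        rw [e]; exact this
    · intro i hi
      rcases Nat.eq_zero_or_pos i with h'|h'
      · subst h'; simp [u.2]
      · simp only [if_neg (by omega : ¬ i = 0)]; exact hmem _ (by omega)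

lemma fun_to_reach {D : Set V} (p : ℕ → V) :
    ∀ ℓ, (∀ i, i < ℓ → G.Adj (p i) (p (i+1))) → ∀ (hmem : ∀ i, i ≤ ℓ → p i ∈ D),
      (G.induce D).Reachable ⟨p 0, hmem 0 (by omega)⟩ ⟨p ℓ, hmem ℓ le_rfl⟩ := by
  intro ℓ
  induction ℓ with
  | zero => intro _ _; rfl
  | succ n ih =>
    intro hadj hmem
    have h1 := ih (fun i hi => hadj i (by omega)) (fun i hi => hmem i (by omega))
    refine h1.trans (Adj.reachable ?_)
    exact hadj n (by omega)

lemma exists_induced_funpath {D : Set V} {u v : V}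
    (h : ∃ ℓ p, FunPath G D u v ℓ p) :
    ∃ ℓ p, FunPath G D u v ℓ p ∧ (∀ i j, i < j → j ≤ ℓ → p i ≠ p j) ∧
      (∀ i j, i + 1 < j → j ≤ ℓ → ¬ G.Adj (p i) (p j)) := by
  classical
  obtain ⟨ℓ₀, hQ⟩ := h
  have hQ' : ∃ ℓ, ∃ p, FunPath G D u v ℓ p := ⟨ℓ₀, hQ⟩
  obtain ⟨p, hp⟩ := Nat.find_spec hQ'
  set ℓ := Nat.find hQ' with hℓdef
  obtain ⟨h0, hl, hadj, hmem⟩ := hp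
  have build : ∀ (i s : ℕ), 0 < s → i + s ≤ ℓ →
      (i + s = ℓ → p i = p ℓ) →
      (i + s < ℓ → G.Adj (p i) (p (i + s + 1))) → False := by
    intro i s hs his hend hglue
    have : ∃ q, FunPath G D u v (ℓ - s) q := by
      refine ⟨fun k => if k ≤ i then p k else p (k + s), ?_, ?_, ?_, ?_⟩
      · simpa using h0
      · by_cases hc : ℓ - s ≤ i
        · have hi : i + s = ℓ := by omega
          have : ℓ - s = i := by omega
          rw [this]; simp only [le_refl, if_pos]
          rw [hend hi]; exact hl
        · simp only [if_neg hc]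
          have : ℓ - s + s = ℓ := by omega
          rw [this]; exact hl
      · intro k hk
        by_cases h1 : k + 1 ≤ i
        · simp only [if_pos h1, if_pos (by omega : k ≤ i)]
          exact hadj k (by omega)
        · by_cases h2 : k ≤ i
          · have hki : k = i := by omega
            simp only [if_pos h2, if_neg h1]
            subst hki
            have : k + 1 + s = k + s + 1 := by omega
            rw [this]
            exact hglue (by omega)
          · simp only [if_neg h2, if_neg h1]
            have : k + 1 + s = (k + s) + 1 := by omega
            rw [this]
            exact hadj (k + s) (by omega)
      · intro k hk1 hk2
        by_cases h2 : k ≤ i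
        · simp only [if_pos h2]; exact hmem k hk1 (by omega)
        · simp only [if_neg h2]; exact hmem (k + s) (by omega) (by omega)
    exact Nat.find_min hQ' (by omega : ℓ - s < ℓ) this
  refine ⟨ℓ, p, ⟨h0, hl, hadj, hmem⟩, ?_, ?_⟩
  · intro i j hij hj heq
    refine build i (j - i) (by omega) (by omega) (fun he => ?_) (fun hlt => ?_)
    · have : j = ℓ := by omega
      rw [heq, this]
    · have : i + (j - i) + 1 = j + 1 := by omega
      rw [this, heq]
      exact hadj j (by omega)
  · intro i j h1 h2 hadj'
    refine build i (j - i - 1) (by omega) (by omega) (fun he => absurd he (by omega)) (fun _ => ?_)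
    have : i + (j - i - 1) + 1 = j := by omega
    rw [this]; exact hadj'

lemma fin_sub_val_eq_one {n : ℕ} (hn : 3 ≤ n) (i j : Fin n) :
    (i - j).val = 1 ↔ (i.val = j.val + 1 ∨ (j.val = n - 1 ∧ i.val = 0)) := by
  have hi := i.isLt; have hj := j.isLt
  rw [Fin.sub_def]
  show (n - j.val + i.val) % n = 1 ↔ _
  rcases le_or_gt j.val i.val with h | h
  · have e : n - j.val + i.val = (i.val - j.val) + n := by omega
    rw [e, Nat.add_mod_right, Nat.mod_eq_of_lt (by omega)]
    omega
  · rw [Nat.mod_eq_of_lt (by omega)]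
    omega

lemma hole_of_fun {n : ℕ} (hn : 3 ≤ n) (g : ℕ → V)
    (hinj : ∀ i j, i < j → j < n → g i ≠ g j)
    (hadj : ∀ i, i + 1 < n → G.Adj (g i) (g (i+1)))
    (hlast : G.Adj (g (n-1)) (g 0))
    (hnon : ∀ i j, i + 1 < j → j < n → ¬(i = 0 ∧ j = n - 1) → ¬ G.Adj (g i) (g j)) :
    Nonempty (cycleGraph n ↪g G) := by
  refine ⟨⟨⟨fun i => g i.val, ?_⟩, ?_⟩⟩
  · intro i j hij
    rcases Nat.lt_trichotomy i.val j.val with h|h|h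
    · exact absurd hij (hinj i.val j.val h j.isLt)
    · exact Fin.ext h
    · exact absurd hij.symm (hinj j.val i.val h i.isLt)
  · intro i j
    show G.Adj (g i.val) (g j.val) ↔ (cycleGraph n).Adj i j
    rw [cycleGraph_adj', fin_sub_val_eq_one hn i j, fin_sub_val_eq_one hn j i]
    have hi := i.isLt; have hj := j.isLt
    constructor
    · intro hadj'
      by_contra hcon
      rcases Nat.lt_trichotomy i.val j.val with h|h|h
      · have hne1 : j.val ≠ i.val + 1 := fun he => hcon (Or.inr (Or.inl he))
        have hne2 : ¬(i.val = 0 ∧ j.val = n-1) := fun ⟨ha, hb⟩ => hcon (Or.inl (Or.inr ⟨hb, ha⟩))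
        exact hnon i.val j.val (by omega) hj hne2 hadj'
      · rw [h] at hadj'; exact G.irrefl hadj'
      · have hne1 : i.val ≠ j.val + 1 := fun he => hcon (Or.inl (Or.inl he))
        have hne2 : ¬(j.val = 0 ∧ i.val = n-1) := fun ⟨ha, hb⟩ => hcon (Or.inr (Or.inr ⟨hb, ha⟩))
        exact hnon j.val i.val (by omega) hi hne2 hadj'.symm
    · rintro ((h | ⟨h1, h2⟩) | (h | ⟨h1, h2⟩))
      · rw [h]; exact (hadj j.val (by omega)).symm
      · rw [h1, h2]; exact hlast.symm
      · rw [h]; exact hadj i.val (by omega)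
      · rw [h1, h2]; exact hlast

lemma comp_subset {S A B : Set V} (hA : IsCompOf G S A) (hB : IsCompOf G S B) {v : V}
    (hvA : v ∈ A) (hvB : v ∈ B) : B ⊆ A := by
  intro w hw
  obtain ⟨wk⟩ := hB.2.2.1.preconnected ⟨v, hvB⟩ ⟨w, hw⟩
  obtain ⟨ℓ, p, h0, hl, hadj, hmem⟩ := walk_to_fun wk
  have key : ∀ i, i ≤ ℓ → p i ∈ A := by
    intro i
    induction i with
    | zero => intro _; rw [h0]; exact hvA
    | succ k ih =>
      intro hk
      exact hA.2.2.2 (p k) (ih (by omega)) (p (k+1))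
        (hB.2.1 (hmem (k+1) hk)) (hadj k (by omega))
  have := key ℓ le_rfl
  rwa [hl] at this

lemma comp_eq_of_mem {S A B : Set V} (hA : IsCompOf G S A) (hB : IsCompOf G S B) {v : V}
    (hvA : v ∈ A) (hvB : v ∈ B) : A = B :=
  le_antisymm (comp_subset hB hA hvB hvA) (comp_subset hA hB hvA hvB)

lemma comp_nonadj_s9 {S A B : Set V} (hA : IsCompOf G S A) (hB : IsCompOf G S B) (hne : A ≠ B)
    {a b : V} (ha : a ∈ A) (hb : b ∈ B) : ¬ G.Adj a b := by
  intro h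
  have hbA : b ∈ A := hA.2.2.2 a ha b (hB.2.1 hb) h
  exact hne (comp_eq_of_mem hA hB hbA hb)

lemma comp_disj {S A B : Set V} (hA : IsCompOf G S A) (hB : IsCompOf G S B) (hne : A ≠ B)
    {a : V} (ha : a ∈ A) : a ∉ B := fun h => hne (comp_eq_of_mem hA hB ha h)

/-- The component of `s` in `G - S`. -/
def compOf (G : SimpleGraph V) (S : Set V) (s : V) (hs : s ∈ (Sᶜ : Set V)) : Set V :=
  {v | ∃ (h : v ∈ (Sᶜ : Set V)), (G.induce (Sᶜ : Set V)).Reachable ⟨s, hs⟩ ⟨v, h⟩}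

lemma mem_compOf_self {S : Set V} {s : V} (hs : s ∈ (Sᶜ : Set V)) :
    s ∈ compOf G S s hs := ⟨hs, Reachable.refl _⟩

lemma compOf_reach_from {S : Set V} {s : V} (hs : s ∈ (Sᶜ : Set V)) {x : V}
    (hx : x ∈ compOf G S s hs) (hself : s ∈ compOf G S s hs) :
    (G.induce (compOf G S s hs)).Reachable ⟨s, hself⟩ ⟨x, hx⟩ := by
  obtain ⟨hxS, hr⟩ := hx
  obtain ⟨wk⟩ := hr
  obtain ⟨ℓ, p, h0, hl, hadj, hmem⟩ := walk_to_fun wk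
  have hpc : ∀ i, i ≤ ℓ → p i ∈ compOf G S s hs := by
    intro i hi
    refine ⟨hmem i hi, ?_⟩
    have := fun_to_reach p i (fun k hk => hadj k (by omega)) (fun k hk => hmem k (by omega))
    have e : (⟨p 0, hmem 0 (by omega)⟩ : ↥(Sᶜ : Set V)) = ⟨s, hs⟩ := Subtype.ext h0
    rwa [e] at this
  have := fun_to_reach p ℓ hadj hpc
  have e0 : (⟨p 0, hpc 0 (by omega)⟩ : ↥(compOf G S s hs)) = ⟨s, hself⟩ := Subtype.ext h0
  have el : (⟨p ℓ, hpc ℓ le_rfl⟩ : ↥(compOf G S s hs)) = ⟨x, ⟨hxS, ⟨wk⟩⟩⟩ := Subtype.ext hl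
  rwa [e0, el] at this

lemma compOf_isComp {S : Set V} {s : V} (hs : s ∈ (Sᶜ : Set V)) :
    IsCompOf G S (compOf G S s hs) := by
  have hne : Nonempty ↥(compOf G S s hs) := ⟨⟨s, mem_compOf_self hs⟩⟩
  refine ⟨⟨s, mem_compOf_self hs⟩, fun v hv => hv.1, ⟨?_⟩, ?_⟩
  · rintro ⟨x, hx⟩ ⟨y, hy⟩
    exact (compOf_reach_from hs hx (mem_compOf_self hs)).symm.trans
      (compOf_reach_from hs hy (mem_compOf_self hs))
  · rintro v ⟨hvS, hvr⟩ w hwS hadj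
    exact ⟨hwS, hvr.trans (Adj.reachable (by exact hadj : G.Adj v w))⟩

lemma compOf_full {S : Set V} {s t : V}
    (hsep : IsSep G S s t) (hmin : ∀ Y ⊆ S, IsSep G Y s t → Y = S)
    (hs : s ∈ (Sᶜ : Set V)) :
    IsFullComp G S (compOf G S s hs) := by
  refine ⟨compOf_isComp hs, le_antisymm ?_ ?_⟩
  · rintro v ⟨hvC, d, hd, hadj⟩
    by_contra hvS
    exact hvC ((compOf_isComp hs).2.2.2 d hd v hvS hadj.symm)
  · intro x hxS
    by_contra hxn
    rw [nbhdSet, Set.mem_setOf_eq] at hxn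
    push_neg at hxn
    have hxC : x ∉ compOf G S s hs := fun h => (h.1 : x ∈ Sᶜ) hxS
    have hno : ∀ d ∈ compOf G S s hs, ¬ G.Adj x d := hxn hxC
    -- S \ {x} is still a separator
    obtain ⟨hs', ht', hnr⟩ := hsep
    have hsep' : IsSep G (S \ {x}) s t := by
      refine ⟨fun h => hs' h.1, fun h => ht' h.1, ?_⟩
      intro hr
      obtain ⟨wk⟩ := hr
      obtain ⟨ℓ, p, h0, hl, hadj, hmem⟩ := walk_to_fun wk
      have key : ∀ i, i ≤ ℓ → p i ∈ compOf G S s hs := by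
        intro i
        induction i with
        | zero => intro _; rw [h0]; exact mem_compOf_self hs
        | succ k ih =>
          intro hk
          have hpk := ih (by omega)
          have hnotY : p (k+1) ∉ S \ {x} := hmem (k+1) hk
          by_cases hpx : p (k+1) = x
          · exact absurd ((hadj k (by omega)).symm) (by rw [hpx]; exact fun h => hno _ hpk h)
          · have : p (k+1) ∉ S := fun h => hnotY ⟨h, hpx⟩
            exact (compOf_isComp hs).2.2.2 (p k) hpk (p (k+1)) this (hadj k (by omega))
      have htC : t ∈ compOf G S s hs := by
        have := key ℓ le_rfl; rwa [hl] at this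
      exact hnr htC.2
    have := hmin (S \ {x}) Set.diff_subset hsep'
    have hx2 : x ∈ S \ {x} := by rw [this]; exact hxS
    exact hx2.2 rfl

lemma exists_two_full {S : Set V} (hS : IsMinSep G S) :
    ∃ B C : Set V, IsFullComp G S B ∧ IsFullComp G S C ∧ B ≠ C := by
  obtain ⟨s, t, hsep, hmin⟩ := hS
  obtain ⟨hs, ht, hnr⟩ := hsep
  have hsep' : IsSep G S s t := ⟨hs, ht, hnr⟩
  have hsep'' : IsSep G S t s := ⟨ht, hs, fun h => hnr h.symm⟩
  refine ⟨compOf G S s hs, compOf G S t ht, compOf_full hsep' hmin hs,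
    compOf_full hsep'' (fun Y hY hsepY => hmin Y hY ⟨hsepY.2.choose, hsepY.choose,
      fun h => hsepY.2.choose_spec h.symm⟩) ht, ?_⟩
  intro he
  have : t ∈ compOf G S s hs := he ▸ mem_compOf_self ht
  exact hnr this.2

lemma funpath_via {S A : Set V} (hA : IsCompOf G S A) {u v ax ay : V} (hax : ax ∈ A)
    (hay : ay ∈ A) (hu : G.Adj u ax) (hv : G.Adj ay v) : ∃ ℓ p, FunPath G A u v ℓ p := by
  obtain ⟨wk⟩ := hA.2.2.1.preconnected ⟨ax, hax⟩ ⟨ay, hay⟩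
  obtain ⟨ℓ₀, q, hq0, hql, hqadj, hqmem⟩ := walk_to_fun wk
  refine ⟨ℓ₀ + 2, fun i => if i = 0 then u else if i ≤ ℓ₀ + 1 then q (i-1) else v,
    by simp, by simp only [if_neg (by omega : ¬ ℓ₀+2 = 0), if_neg (by omega : ¬ ℓ₀+2 ≤ ℓ₀+1)], ?_, ?_⟩
  · intro i hi
    by_cases h0 : i = 0
    · subst h0
      simp only [if_pos rfl, if_neg (by omega : ¬ (0:ℕ)+1 = 0), if_pos (by omega : (0:ℕ)+1 ≤ ℓ₀+1)]
      rwa [hq0]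
    · by_cases h1 : i ≤ ℓ₀
      · simp only [if_neg h0, if_neg (by omega : ¬ i+1 = 0), if_pos (by omega : i ≤ ℓ₀+1),
          if_pos (by omega : i+1 ≤ ℓ₀+1)]
        have := hqadj (i-1) (by omega)
        rwa [show i + 1 - 1 = (i-1)+1 by omega]
      · have h2 : i = ℓ₀ + 1 := by omega
        subst h2
        simp only [if_neg h0, if_neg (by omega : ¬ ℓ₀+1+1 = 0), if_pos (le_refl _),
          if_neg (by omega : ¬ ℓ₀+1+1 ≤ ℓ₀+1)]
        rw [show ℓ₀ + 1 - 1 = ℓ₀ by omega, hql]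
        exact hv
  · intro i hi1 hi2
    simp only [if_neg (by omega : ¬ i = 0), if_pos (by omega : i ≤ ℓ₀+1)]
    exact hqmem (i-1) (by omega)

lemma funpath_from_inside {S A : Set V} (hA : IsCompOf G S A) {a v ax : V} (ha : a ∈ A)
    (hax : ax ∈ A) (hv : G.Adj ax v) : ∃ ℓ p, FunPath G A a v ℓ p := by
  obtain ⟨wk⟩ := hA.2.2.1.preconnected ⟨a, ha⟩ ⟨ax, hax⟩
  obtain ⟨ℓ₀, q, hq0, hql, hqadj, hqmem⟩ := walk_to_fun wk
  refine ⟨ℓ₀ + 1, fun i => if i ≤ ℓ₀ then q i else v, by simp [hq0],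
    by simp only [if_neg (by omega : ¬ ℓ₀+1 ≤ ℓ₀)], ?_, ?_⟩
  · intro i hi
    by_cases h1 : i < ℓ₀
    · simp only [if_pos (by omega : i ≤ ℓ₀), if_pos (by omega : i+1 ≤ ℓ₀)]
      exact hqadj i h1
    · have h2 : i = ℓ₀ := by omega
      subst h2
      simp only [if_pos (le_refl _), if_neg (by omega : ¬ i+1 ≤ i)]
      rwa [hql]
  · intro i hi1 hi2
    simp only [if_pos (by omega : i ≤ ℓ₀)]
    exact hqmem i (by omega)

lemma pair_common (hG : LongHoleFree G) {S A B : Set V} (hA : IsFullComp G S A)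
    (hB : IsFullComp G S B) (hne : A ≠ B) {x y : V} (hx : x ∈ S) (hy : y ∈ S)
    (hxy : x ≠ y) (hnadj : ¬ G.Adj x y) : ∃ a ∈ A, G.Adj a x ∧ G.Adj a y := by
  obtain ⟨hxnA, ax, haxA, hadjx⟩ : x ∈ nbhdSet G A := hA.2.symm ▸ hx
  obtain ⟨hynA, ay, hayA, hadjy⟩ : y ∈ nbhdSet G A := hA.2.symm ▸ hy
  obtain ⟨ℓ, p, ⟨hp0, hpl, hpadj, hpmem⟩, hpinj, hpchord⟩ :=
    exists_induced_funpath (funpath_via hA.1 haxA hayA hadjx hadjy.symm)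
  have hl0 : ℓ ≠ 0 := fun h => hxy (by rw [← hp0, ← hpl, h])
  have hl1 : ℓ ≠ 1 := fun h => hnadj (by have := hpadj 0 (by omega); rwa [hp0, show (0:ℕ)+1 = ℓ by omega, hpl] at this)
  by_cases hl2' : ℓ = 2
  · refine ⟨p 1, hpmem 1 (by omega) (by omega), ?_, ?_⟩
    · have := hpadj 0 (by omega); rw [hp0] at this; exact this.symm
    · have := hpadj 1 (by omega); rwa [show (1:ℕ)+1 = ℓ by omega, hpl] at this
  · have hl3 : 3 ≤ ℓ := by omega
    obtain ⟨hxnB, bx, hbxB, hadjxB⟩ : x ∈ nbhdSet G B := hB.2.symm ▸ hx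
    obtain ⟨hynB, by', hbyB, hadjyB⟩ : y ∈ nbhdSet G B := hB.2.symm ▸ hy
    obtain ⟨m, q, ⟨hq0, hqm, hqadj, hqmem⟩, hqinj, hqchord⟩ :=
      exists_induced_funpath (funpath_via hB.1 hbxB hbyB hadjxB hadjyB.symm)
    have hm0 : m ≠ 0 := fun h => hxy (by rw [← hq0, ← hqm, h])
    have hm1 : m ≠ 1 := fun h => hnadj (by have := hqadj 0 (by omega); rwa [hq0, show (0:ℕ)+1 = m by omega, hqm] at this)
    have hm2 : 2 ≤ m := by omega
    set n := ℓ + m with hn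
    set g : ℕ → V := fun i => if i ≤ ℓ then p i else q (n - i) with hg
    have hAB : ∀ c ∈ A, ∀ d ∈ B, ¬ G.Adj c d := fun c hc d hd => comp_nonadj_s9 hA.1 hB.1 hne hc hd
    have hABd : ∀ c ∈ A, c ∉ B := fun c hc => comp_disj hA.1 hB.1 hne hc
    have hxS : x ∉ A := fun h => (hA.1.2.1 h) hx
    have hyS : y ∉ A := fun h => (hA.1.2.1 h) hy
    have hinj : ∀ i j, i < j → j < n → g i ≠ g j := by
      intro i j hij hjn heq
      simp only [hg] at heq
      by_cases hj : j ≤ ℓ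
      · rw [if_pos (by omega : i ≤ ℓ), if_pos hj] at heq
        exact hpinj i j hij hj heq
      · rw [if_neg hj] at heq
        have hqB : q (n - j) ∈ B := hqmem (n-j) (by omega) (by omega)
        by_cases hi : i ≤ ℓ
        · rw [if_pos hi] at heq
          by_cases hi0 : i = 0
          · subst hi0; rw [hp0] at heq; exact hxnB (heq ▸ hqB)
          · by_cases hil : i = ℓ
            · subst hil; rw [hpl] at heq; exact hynB (heq ▸ hqB)
            · exact hABd (p i) (hpmem i (by omega) (by omega)) (heq ▸ hqB)
        · rw [if_neg hi] at heq
          exact hqinj (n-j) (n-i) (by omega) (by omega) heq.symm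
    have hadjg : ∀ i, i + 1 < n → G.Adj (g i) (g (i+1)) := by
      intro i hi
      simp only [hg]
      by_cases h1 : i + 1 ≤ ℓ
      · rw [if_pos (by omega : i ≤ ℓ), if_pos h1]
        exact hpadj i (by omega)
      · by_cases h2 : i ≤ ℓ
        · have hil : i = ℓ := by omega
          rw [if_pos h2, if_neg h1, hil, hpl, show n - (ℓ + 1) = m - 1 by omega, ← hqm]
          have h3 := hqadj (m-1) (by omega)
          rw [show m - 1 + 1 = m by omega] at h3
          exact h3.symm
        · rw [if_neg h2, if_neg (by omega : ¬ i + 1 ≤ ℓ)]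
          have := hqadj (n-i-1) (by omega)
          rw [show n - i - 1 + 1 = n - i by omega] at this
          rw [show n - (i+1) = n - i - 1 by omega]
          exact this.symm
    have hlastg : G.Adj (g (n-1)) (g 0) := by
      simp only [hg]
      rw [if_neg (by omega : ¬ n - 1 ≤ ℓ), if_pos (by omega : (0:ℕ) ≤ ℓ),
        show n - (n-1) = 1 by omega, hp0, ← hq0]
      exact (hqadj 0 (by omega)).symm
    have hnong : ∀ i j, i + 1 < j → j < n → ¬(i = 0 ∧ j = n - 1) → ¬ G.Adj (g i) (g j) := by
      intro i j hij hjn hne0 hadj'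
      simp only [hg] at hadj'
      by_cases hj : j ≤ ℓ
      · rw [if_pos (by omega : i ≤ ℓ), if_pos hj] at hadj'
        exact hpchord i j hij hj hadj'
      · rw [if_neg hj] at hadj'
        have hqB : q (n - j) ∈ B := hqmem (n-j) (by omega) (by omega)
        by_cases hi : i ≤ ℓ
        · rw [if_pos hi] at hadj'
          by_cases hi0 : i = 0
          · have hj' : j ≠ n - 1 := fun h => hne0 ⟨hi0, h⟩
            subst hi0
            rw [hp0, ← hq0] at hadj'
            exact hqchord 0 (n-j) (by omega) (by omega) hadj'
          · by_cases hil : i = ℓ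
            · subst hil
              rw [hpl, ← hqm] at hadj'
              exact hqchord (n-j) m (by omega) le_rfl hadj'.symm
            · exact hAB (p i) (hpmem i (by omega) (by omega)) (q (n-j)) hqB hadj'
        · rw [if_neg hi] at hadj'
          exact hqchord (n-j) (n-i) (by omega) (by omega) hadj'.symm
    obtain ⟨e⟩ := hole_of_fun (by omega : 3 ≤ n) g hinj hadjg hlastg hnong
    exact ((hG n (by omega)).false e).elim


theorem stmt9 [Fintype V] (G : SimpleGraph V) (hG : LongHoleFree G)
    (S A : Set V) (hS : IsMinSep G S) (hA : IsFullComp G S A)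
    (M : Set V) (hMS : M ⊆ S) (hM : M.Pairwise fun a b => ¬ G.Adj a b) :
    ∃ a ∈ A, M ⊆ G.neighborSet a := by
  classical
  obtain ⟨B₁, B₂, hB₁, hB₂, hB12⟩ := exists_two_full hS
  obtain ⟨B, hBfull, hABne⟩ : ∃ B, IsFullComp G S B ∧ A ≠ B := by
    by_cases h : A = B₁
    · exact ⟨B₂, hB₂, fun he => hB12 (h ▸ he ▸ rfl)⟩
    · exact ⟨B₁, hB₁, h⟩
  have main : ∀ (N : Set V), N.Finite → N ⊆ S → N.Pairwise (fun a b => ¬G.Adj a b) →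
      ∃ a ∈ A, ∀ y ∈ N, G.Adj a y := by
    intro N hNfin
    refine Set.Finite.induction_on
      (motive := fun N _ => N ⊆ S → N.Pairwise (fun a b => ¬G.Adj a b) → ∃ a ∈ A, ∀ y ∈ N, G.Adj a y)
      N hNfin ?_ ?_
    · intro _ _
      obtain ⟨a, ha⟩ := hA.1.1
      exact ⟨a, ha, fun y hy => absurd hy (Set.notMem_empty y)⟩
    · intro x M₀ hxM₀ hM₀fin ih hsub hpw
      have hsub₀ : M₀ ⊆ S := fun z hz => hsub (Set.mem_insert_of_mem x hz)
      have hpw₀ : M₀.Pairwise (fun a b => ¬G.Adj a b) := hpw.mono (Set.subset_insert x M₀)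
      obtain ⟨a, haA, hacomm⟩ := ih hsub₀ hpw₀
      by_cases hax : G.Adj a x
      · refine ⟨a, haA, fun y hy => ?_⟩
        rcases Set.mem_insert_iff.mp hy with h|h
        · rw [h]; exact hax
        · exact hacomm y h
      · have hxSmem : x ∈ S := hsub (Set.mem_insert x M₀)
        obtain ⟨hxnA, ax, haxA, hadjx⟩ : x ∈ nbhdSet G A := hA.2.symm ▸ hxSmem
        obtain ⟨ℓ, p, ⟨hp0, hpl, hpadj, hpmem⟩, hpinj, hpchord⟩ :=
          exists_induced_funpath (funpath_from_inside hA.1 haA haxA hadjx.symm)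
        have hl0 : ℓ ≠ 0 := fun h => hxnA (by rw [← hpl, h, hp0]; exact haA)
        have hl1 : ℓ ≠ 1 := fun h => hax
          (by have := hpadj 0 (by omega); rwa [hp0, show (0:ℕ)+1 = ℓ by omega, hpl] at this)
        have hl2 : 2 ≤ ℓ := by omega
        have hpA : ∀ i, i < ℓ → p i ∈ A := by
          intro i hi
          rcases Nat.eq_zero_or_pos i with h|h
          · rw [h, hp0]; exact haA
          · exact hpmem i h hi
        have hkey : ∀ y ∈ M₀, G.Adj (p (ℓ-1)) y := by
          intro y hy
          have hyS : y ∈ S := hsub₀ hy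
          have hyx : y ≠ x := fun h => hxM₀ (h ▸ hy)
          have hnadjxy : ¬ G.Adj x y :=
            hpw (Set.mem_insert x M₀) (Set.mem_insert_of_mem x hy) (Ne.symm hyx)
          obtain ⟨b, hbB, hbx, hby⟩ :=
            pair_common hG hBfull hA (Ne.symm hABne) hxSmem hyS (Ne.symm hyx) hnadjxy
          have hbS : b ∉ S := hBfull.1.2.1 hbB
          have hyA : y ∉ A := fun h => (hA.1.2.1 h) hyS
          set P : ℕ → Prop := fun i => G.Adj (p i) y with hP
          have hP0 : P 0 := by rw [hP]; simp only; rw [hp0]; exact hacomm y hy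
          set i := Nat.findGreatest P (ℓ-1) with hidef
          have hPi : P i := Nat.findGreatest_spec (Nat.zero_le _) hP0
          have hmax : ∀ j, i < j → j ≤ ℓ-1 → ¬ P j := fun j h1 h2 =>
            Nat.findGreatest_is_greatest h1 h2
          have hile : i ≤ ℓ-1 := Nat.findGreatest_le _
          by_cases hieq : i = ℓ - 1
          · rw [← hieq]; exact hPi
          · exfalso
            have hi2 : i ≤ ℓ - 2 := by omega
            set n := ℓ - i + 3 with hn
            set g : ℕ → V := fun k => if k = 0 then y else if k ≤ ℓ - i + 1 then p (i + k - 1) else b with hg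
            have hinj : ∀ k k', k < k' → k' < n → g k ≠ g k' := by
              intro k k' hkk hk'n heq
              simp only [hg] at heq
              rw [if_neg (by omega : ¬ k' = 0)] at heq
              by_cases hk0 : k = 0
              · rw [if_pos hk0] at heq
                by_cases hk' : k' ≤ ℓ - i + 1
                · rw [if_pos hk'] at heq
                  by_cases hj : i + k' - 1 = ℓ
                  · rw [hj, hpl] at heq; exact hyx heq
                  · exact hyA (heq ▸ hpA (i + k' - 1) (by omega))
                · rw [if_neg hk'] at heq
                  exact hbS (heq ▸ hyS)
              · rw [if_neg hk0] at heq
                by_cases hk' : k' ≤ ℓ - i + 1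
                · rw [if_pos hk', if_pos (by omega : k ≤ ℓ - i + 1)] at heq
                  exact hpinj (i + k - 1) (i + k' - 1) (by omega) (by omega) heq
                · rw [if_neg hk', if_pos (by omega : k ≤ ℓ - i + 1)] at heq
                  by_cases hj : i + k - 1 = ℓ
                  · rw [hj, hpl] at heq
                    exact hbS (heq ▸ hxSmem)
                  · exact comp_disj hA.1 hBfull.1 hABne (hpA (i + k - 1) (by omega)) (heq ▸ hbB)
            have hadjg : ∀ k, k + 1 < n → G.Adj (g k) (g (k+1)) := by
              intro k hk
              simp only [hg]
              by_cases hk0 : k = 0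
              · rw [if_pos hk0, if_neg (by omega : ¬ k + 1 = 0),
                  if_pos (by omega : k + 1 ≤ ℓ - i + 1), hk0,
                  show i + (0 + 1) - 1 = i by omega]
                exact hPi.symm
              · rw [if_neg hk0, if_neg (by omega : ¬ k + 1 = 0),
                  if_pos (by omega : k ≤ ℓ - i + 1)]
                by_cases hk' : k + 1 ≤ ℓ - i + 1
                · rw [if_pos hk', show i + (k + 1) - 1 = (i + k - 1) + 1 by omega]
                  exact hpadj (i + k - 1) (by omega)
                · rw [if_neg hk', show i + k - 1 = ℓ by omega, hpl]
                  exact hbx.symm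
            have hlastg : G.Adj (g (n-1)) (g 0) := by
              simp only [hg]
              rw [if_neg (by omega : ¬ n - 1 = 0), if_neg (by omega : ¬ n - 1 ≤ ℓ - i + 1)]
              exact hby
            have hnong : ∀ k k', k + 1 < k' → k' < n → ¬(k = 0 ∧ k' = n - 1) →
                ¬ G.Adj (g k) (g k') := by
              intro k k' hkk hk'n hne0 hadj'
              simp only [hg] at hadj'
              rw [if_neg (by omega : ¬ k' = 0)] at hadj'
              by_cases hk0 : k = 0
              · have hk'ne : k' ≠ n - 1 := fun h => hne0 ⟨hk0, h⟩
                rw [if_pos hk0, if_pos (by omega : k' ≤ ℓ - i + 1)] at hadj'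
                by_cases hj : i + k' - 1 = ℓ
                · rw [hj, hpl] at hadj'
                  exact hnadjxy hadj'.symm
                · exact hmax (i + k' - 1) (by omega) (by omega) hadj'.symm
              · rw [if_neg hk0] at hadj'
                by_cases hk' : k' ≤ ℓ - i + 1
                · rw [if_pos hk', if_pos (by omega : k ≤ ℓ - i + 1)] at hadj'
                  exact hpchord (i + k - 1) (i + k' - 1) (by omega) (by omega) hadj'
                · rw [if_neg hk', if_pos (by omega : k ≤ ℓ - i + 1)] at hadj'
                  exact comp_nonadj_s9 hA.1 hBfull.1 hABne (hpA (i + k - 1) (by omega)) hbB hadj'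
            obtain ⟨e⟩ := hole_of_fun (by omega : 3 ≤ n) g hinj hadjg hlastg hnong
            exact (hG n (by omega)).false e
        refine ⟨p (ℓ-1), hpA (ℓ-1) (by omega), fun y hy => ?_⟩
        rcases Set.mem_insert_iff.mp hy with h|h
        · rw [h]
          have := hpadj (ℓ-1) (by omega)
          rwa [show ℓ-1+1 = ℓ by omega, hpl] at this
        · exact hkey y h
  obtain ⟨a, ha, hcomm⟩ := main M (Set.toFinite M) hMS hM
  exact ⟨a, ha, fun y hy => hcomm y hy⟩
end
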